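/- arXiv:1701.04685 — 3 statements merged into one kernel-verified Lean document; each statement's English description precedes it below -/
import Mathlib

section
/- Let M ∈ ℤ^{d×d} be regular and f ∈ L²(𝕋^d). A function g ∈ L²(𝕋^d) lies in the span of the translates {f(· − 2πy) : y ∈ P(M)} if and only if there exist coefficients â_h ∈ ℂ indexed by h ∈ G(Mᵀ) such that c_{h+Mᵀz}(g) = â_h · c_{h+Mᵀz}(f) for all h ∈ G(Mᵀ) and z ∈ ℤ^d. -/
open scoped Real
open MeasureTheory

/-- The pattern of a regular integer matrix `M`. -/
def pattern (d : ℕ) (M : Matrix (Fin d) (Fin d) ℤ) : Set (Fin d → ℝ) :=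
  {y | (∀ i, ∃ z : ℤ, (M.map (Int.cast : ℤ → ℝ)).mulVec y i = z) ∧
       ∀ i, y i ∈ Set.Ico (-(1/2) : ℝ) (1/2)}

/-- The generating set `G(Mᵀ) = {h ∈ ℤ^d : M⁻ᵀ h ∈ [-1/2,1/2)^d}`. -/
def genSet (d : ℕ) (M : Matrix (Fin d) (Fin d) ℤ) : Set (Fin d → ℤ) :=
  {h | ∀ i, (((M.map (Int.cast : ℤ → ℝ)).transpose)⁻¹.mulVec fun j => (h j : ℝ)) i ∈
        Set.Ico (-(1/2) : ℝ) (1/2)}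

/-- Fourier coefficient `c_k(f) = (2π)^{-d} ∫_{[-π,π)^d} f(x) e^{-i kᵀx} dx`. -/
noncomputable def torusCoeff (d : ℕ) (f : (Fin d → ℝ) → ℂ) (k : Fin d → ℤ) : ℂ :=
  (∫ x in Set.univ.pi fun _ : Fin d => Set.Ico (-π) π,
      f x * Complex.exp (-Complex.I * ∑ i, (k i : ℂ) * (x i : ℂ))) / ((2 * π) ^ d : ℝ)



lemma oneDim (n : ℤ) :
    ∫ t in Set.Ico (-π) π, Complex.exp (Complex.I * n * t) =
      if n = 0 then ((2 * π : ℝ) : ℂ) else 0 := by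
  have hle : -π ≤ π := by linarith [Real.pi_pos]
  rw [MeasureTheory.integral_Ico_eq_integral_Ioo, ← MeasureTheory.integral_Ioc_eq_integral_Ioo,
    ← intervalIntegral.integral_of_le hle]
  by_cases hn : n = 0
  · rw [if_pos hn]
    simp only [hn, Int.cast_zero, mul_zero, zero_mul, Complex.exp_zero]
    rw [intervalIntegral.integral_const]
    rw [Complex.real_smul]
    push_cast
    ring
  · rw [if_neg hn]
    have hc : (Complex.I * n) ≠ 0 := by
      simp [Complex.I_ne_zero, hn]
    simp only [mul_assoc]
    have := integral_exp_mul_complex hc (a := -π) (b := π)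
    simp only [mul_assoc] at this
    rw [this]
    have h1 : Complex.exp (Complex.I * (n * π)) - Complex.exp (Complex.I * (n * ↑(-π))) = 0 := by
      have : Complex.exp (Complex.I * (n * π)) =
          Complex.exp (Complex.I * (n * ↑(-π))) * Complex.exp (n * (2 * π * Complex.I)) := by
        rw [← Complex.exp_add]; push_cast; ring_nf
      rw [this, Complex.exp_int_mul_two_pi_mul_I, mul_one, sub_self]
    rw [h1, zero_div]

lemma boxInt (d : ℕ) (n : Fin d → ℤ) :
    ∫ x in Set.univ.pi fun _ : Fin d => Set.Ico (-π) π,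
      Complex.exp (Complex.I * ∑ i, (n i : ℂ) * (x i : ℂ)) =
      if n = 0 then (((2 * π) ^ d : ℝ) : ℂ) else 0 := by
  have key : ∀ x : Fin d → ℝ,
      (Set.univ.pi fun _ : Fin d => Set.Ico (-π) π).indicator
        (fun x : Fin d → ℝ => Complex.exp (Complex.I * ∑ i, (n i : ℂ) * (x i : ℂ))) x
      = ∏ i, (Set.Ico (-π) π).indicator (fun t : ℝ => Complex.exp (Complex.I * n i * t)) (x i) := by
    intro x
    by_cases hx : x ∈ Set.univ.pi fun _ : Fin d => Set.Ico (-π) π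
    · rw [Set.indicator_of_mem hx]
      rw [Set.mem_univ_pi] at hx
      rw [Finset.mul_sum, Complex.exp_sum]
      exact Finset.prod_congr rfl fun i _ => by
        rw [Set.indicator_of_mem (hx i)]; ring_nf
    · rw [Set.indicator_of_notMem hx]
      rw [Set.mem_univ_pi] at hx
      push_neg at hx
      obtain ⟨i, hi⟩ := hx
      exact (Finset.prod_eq_zero (Finset.mem_univ i)
        (by rw [Set.indicator_of_notMem hi])).symm
  rw [← MeasureTheory.integral_indicator (MeasurableSet.univ_pi fun _ => measurableSet_Ico)]
  calc (∫ x, (Set.univ.pi fun _ : Fin d => Set.Ico (-π) π).indicator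
          (fun x : Fin d → ℝ => Complex.exp (Complex.I * ∑ i, (n i : ℂ) * (x i : ℂ))) x)
      = ∫ x : Fin d → ℝ, ∏ i, (Set.Ico (-π) π).indicator
          (fun t : ℝ => Complex.exp (Complex.I * n i * t)) (x i) := by
        exact MeasureTheory.integral_congr_ae (Filter.Eventually.of_forall key)
    _ = ∏ i, ∫ t : ℝ, (Set.Ico (-π) π).indicator
          (fun t : ℝ => Complex.exp (Complex.I * n i * t)) t :=
        MeasureTheory.integral_fintype_prod_eq_prod _
    _ = ∏ i, if n i = 0 then ((2 * π : ℝ) : ℂ) else 0 := by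
        refine Finset.prod_congr rfl fun i _ => ?_
        rw [MeasureTheory.integral_indicator measurableSet_Ico, oneDim]
    _ = if n = 0 then (((2 * π) ^ d : ℝ) : ℂ) else 0 := by
        by_cases hn : n = 0
        · rw [if_pos hn]
          simp only [hn, Pi.zero_apply, if_pos rfl, Finset.prod_const, Finset.card_univ,
            Fintype.card_fin]
          push_cast; ring
        · rw [if_neg hn]
          have : ∃ i, n i ≠ 0 := by
            by_contra hc; push_neg at hc; exact hn (funext hc)
          obtain ⟨i, hi⟩ := this
          exact Finset.prod_eq_zero (Finset.mem_univ i) (if_neg hi)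




lemma norm_char (d : ℕ) (k : Fin d → ℤ) (x : Fin d → ℝ) :
    ‖Complex.exp (Complex.I * ∑ i, (k i : ℂ) * (x i : ℂ))‖ = 1 := by
  have : (∑ i, (k i : ℂ) * (x i : ℂ)) = ((∑ i, (k i : ℝ) * x i : ℝ) : ℂ) := by
    push_cast; rfl
  rw [this, mul_comm, Complex.norm_exp_ofReal_mul_I]

lemma extract (d : ℕ) (C : (Fin d → ℤ) → ℂ) (hC : Summable C) (F : (Fin d → ℝ) → ℂ)
    (hF : ∀ x, F x = ∑' k : Fin d → ℤ,
      C k * Complex.exp (Complex.I * ∑ i, (k i : ℂ) * (x i : ℂ)))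
    (k0 : Fin d → ℤ) : torusCoeff d F k0 = C k0 := by
  have hpi : ((2 * π) ^ d : ℝ) ≠ 0 := by positivity
  have key : ∀ x : Fin d → ℝ,
      F x * Complex.exp (-Complex.I * ∑ i, (k0 i : ℂ) * (x i : ℂ)) =
      ∑' k : Fin d → ℤ, C k * Complex.exp (Complex.I * ∑ i, ((k - k0) i : ℂ) * (x i : ℂ)) := by
    intro x
    rw [hF x, ← tsum_mul_right]
    congr 1; funext k
    rw [mul_assoc, ← Complex.exp_add]
    congr 2
    have : ∀ i, ((k - k0) i : ℂ) = (k i : ℂ) - (k0 i : ℂ) := by intro i; push_cast [Pi.sub_apply]; ring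
    simp_rw [this, sub_mul, Finset.sum_sub_distrib]
    ring
  unfold torusCoeff
  rw [MeasureTheory.integral_congr_ae (Filter.Eventually.of_forall fun x => key x)]
  have hmeas : ∀ k : Fin d → ℤ, AEStronglyMeasurable
      (fun x : Fin d → ℝ => C k * Complex.exp (Complex.I * ∑ i, ((k - k0) i : ℂ) * (x i : ℂ)))
      ((volume : Measure (Fin d → ℝ)).restrict (Set.univ.pi fun _ => Set.Ico (-π) π)) := by
    intro k
    apply Continuous.aestronglyMeasurable
    continuity
  have hCnn : Summable (fun k : Fin d → ℤ => ‖C k‖₊) := by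
    rw [← NNReal.summable_coe]
    simpa using (summable_norm_iff.mpr hC)
  have hbox : (volume : Measure (Fin d → ℝ)) (Set.univ.pi fun _ => Set.Ico (-π) π) < ⊤ := by
    rw [volume_pi_pi]
    simp [Real.volume_Ico]
  have hlint : (∑' k : Fin d → ℤ, ∫⁻ x in Set.univ.pi fun _ : Fin d => Set.Ico (-π) π,
      ‖C k * Complex.exp (Complex.I * ∑ i, ((k - k0) i : ℂ) * (x i : ℂ))‖₊) ≠ ⊤ := by
    have heq : ∀ k : Fin d → ℤ, (∫⁻ x in Set.univ.pi fun _ : Fin d => Set.Ico (-π) π,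
        ‖C k * Complex.exp (Complex.I * ∑ i, ((k - k0) i : ℂ) * (x i : ℂ))‖₊)
        = (‖C k‖₊ : ENNReal) * (volume : Measure (Fin d → ℝ)) (Set.univ.pi fun _ => Set.Ico (-π) π) := by
      intro k
      have : ∀ x : Fin d → ℝ,
          (‖C k * Complex.exp (Complex.I * ∑ i, ((k - k0) i : ℂ) * (x i : ℂ))‖₊ : ENNReal) = ‖C k‖₊ := by
        intro x
        have h1 : ‖C k * Complex.exp (Complex.I * ∑ i, ((k - k0) i : ℂ) * (x i : ℂ))‖ = ‖C k‖ := by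
          rw [norm_mul, norm_char, mul_one]
        congr 1
        ext
        exact h1
      rw [MeasureTheory.lintegral_congr this, MeasureTheory.lintegral_const,
        MeasureTheory.Measure.restrict_apply MeasurableSet.univ, Set.univ_inter]
    rw [tsum_congr heq, ENNReal.tsum_mul_right]
    exact ENNReal.mul_ne_top (ENNReal.tsum_coe_ne_top_iff_summable.mpr hCnn) hbox.ne
  rw [MeasureTheory.integral_tsum hmeas hlint]
  have : ∀ k : Fin d → ℤ, (∫ x in Set.univ.pi fun _ : Fin d => Set.Ico (-π) π,
      C k * Complex.exp (Complex.I * ∑ i, ((k - k0) i : ℂ) * (x i : ℂ)))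
      = if k = k0 then C k0 * (((2 * π) ^ d : ℝ) : ℂ) else 0 := by
    intro k
    rw [integral_const_mul, boxInt]
    by_cases hk : k = k0
    · rw [if_pos (sub_eq_zero.mpr hk), if_pos hk, hk]
    · rw [if_neg (fun h => hk (sub_eq_zero.mp h)), if_neg hk, mul_zero]
  rw [tsum_congr this, tsum_ite_eq, mul_div_assoc]
  rw [div_self (by exact_mod_cast hpi), mul_one]



section core
variable {d : ℕ} (M : Matrix (Fin d) (Fin d) ℤ) (hM : M.det ≠ 0)

-- real matrix
noncomputable abbrev Amat := (M.map (Int.cast : ℤ → ℝ))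

lemma Amat_det : (Amat M).det = (M.det : ℝ) := by
  rw [show Amat M = (Int.castRingHom ℝ).mapMatrix M from rfl, ← RingHom.map_det]; rfl

lemma AmatT_det : (Amat M).transpose.det = (M.det : ℝ) := by
  rw [Matrix.det_transpose, Amat_det]

include hM in
lemma AT_inv_mul : ((Amat M).transpose)⁻¹ * (Amat M).transpose = 1 := by
  apply Matrix.nonsing_inv_mul
  rw [AmatT_det]
  exact isUnit_iff_ne_zero.mpr (by exact_mod_cast hM)

include hM in
lemma AT_mul_inv : (Amat M).transpose * ((Amat M).transpose)⁻¹ = 1 := by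
  apply Matrix.mul_nonsing_inv
  rw [AmatT_det]
  exact isUnit_iff_ne_zero.mpr (by exact_mod_cast hM)

-- cast of integer mulVec
lemma castMulVecT (z : Fin d → ℤ) (i : Fin d) :
    ((M.transpose.mulVec z) i : ℝ) = (Amat M).transpose.mulVec (fun j => (z j : ℝ)) i := by
  simp only [Matrix.mulVec, dotProduct, Matrix.transpose_apply, Amat, Matrix.map_apply]
  push_cast
  rfl

lemma castMulVec (z : Fin d → ℤ) (i : Fin d) :
    ((M.mulVec z) i : ℝ) = (Amat M).mulVec (fun j => (z j : ℝ)) i := by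
  simp only [Matrix.mulVec, dotProduct, Amat, Matrix.map_apply]
  push_cast
  rfl

end core

section core2
variable {d : ℕ} (M : Matrix (Fin d) (Fin d) ℤ) (hM : M.det ≠ 0)

lemma reduce_mem (t : ℝ) : t - ⌊t + 1/2⌋ ∈ Set.Ico (-(1/2) : ℝ) (1/2) := by
  constructor
  · have := Int.floor_le (t + 1/2); linarith
  · have := Int.lt_floor_add_one (t + 1/2); linarith

noncomputable def floorVec (v : Fin d → ℝ) : Fin d → ℤ := fun i => ⌊v i + 1/2⌋

noncomputable def zpart (k : Fin d → ℤ) : Fin d → ℤ :=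
  floorVec (((Amat M).transpose)⁻¹.mulVec fun j => (k j : ℝ))

noncomputable def hpart (k : Fin d → ℤ) : Fin d → ℤ := k - M.transpose.mulVec (zpart M k)

lemma hpart_add (k : Fin d → ℤ) : k = hpart M k + M.transpose.mulVec (zpart M k) := by
  simp [hpart]

include hM in
lemma inv_cast_mulVecT (z : Fin d → ℤ) :
    ((Amat M).transpose)⁻¹.mulVec (fun i => ((M.transpose.mulVec z) i : ℝ)) =
      fun j => (z j : ℝ) := by
  have : (fun i => ((M.transpose.mulVec z) i : ℝ)) =
      (Amat M).transpose.mulVec (fun j => (z j : ℝ)) := funext fun i => castMulVecT M z i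
  rw [this, Matrix.mulVec_mulVec, AT_inv_mul M hM, Matrix.one_mulVec]

include hM in
lemma hpart_mem (k : Fin d → ℤ) : hpart M k ∈ genSet d M := by
  intro i
  have hsub : (fun j => ((hpart M k) j : ℝ)) =
      (fun j => (k j : ℝ)) - (fun i => ((M.transpose.mulVec (zpart M k)) i : ℝ)) := by
    funext j; simp [hpart]
  have : ((Amat M).transpose)⁻¹.mulVec (fun j => ((hpart M k) j : ℝ)) =
      ((Amat M).transpose)⁻¹.mulVec (fun j => (k j : ℝ)) - fun j => ((zpart M k) j : ℝ) := by
    rw [hsub, Matrix.mulVec_sub, inv_cast_mulVecT M hM]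
  rw [this]
  have := reduce_mem ((((Amat M).transpose)⁻¹.mulVec fun j => (k j : ℝ)) i)
  simpa [zpart, floorVec] using this

include hM in
lemma genSet_unique {h h' : Fin d → ℤ} (hh : h ∈ genSet d M) (hh' : h' ∈ genSet d M)
    (z : Fin d → ℤ) (heq : h = h' + M.transpose.mulVec z) : h = h' := by
  set u := ((Amat M).transpose)⁻¹.mulVec (fun j => (h j : ℝ)) with hu
  set u' := ((Amat M).transpose)⁻¹.mulVec (fun j => (h' j : ℝ)) with hu'
  have hcast : (fun j => (h j : ℝ)) =
      (fun j => (h' j : ℝ)) + (fun i => ((M.transpose.mulVec z) i : ℝ)) := by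
    funext j
    rw [heq]
    push_cast [Pi.add_apply]
    ring
  have hdiff : u = u' + fun j => (z j : ℝ) := by
    rw [hu, hu', hcast, Matrix.mulVec_add, inv_cast_mulVecT M hM]
  have hz0 : ∀ j, z j = 0 := by
    intro j
    have h1 : u j ∈ Set.Ico (-(1/2) : ℝ) (1/2) := hh j
    have h2 : u' j ∈ Set.Ico (-(1/2) : ℝ) (1/2) := hh' j
    have hj : u j = u' j + (z j : ℝ) := congrFun hdiff j
    simp only [Set.mem_Ico] at h1 h2
    have : (-1 : ℝ) < (z j : ℝ) ∧ (z j : ℝ) < 1 := by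
      constructor <;> [nlinarith [h1.1, h1.2, h2.1, h2.2]; nlinarith [h1.1, h1.2, h2.1, h2.2]]
    have h3 : (-1 : ℤ) < z j := by exact_mod_cast this.1
    have h4 : z j < 1 := by exact_mod_cast this.2
    omega
  have : M.transpose.mulVec z = 0 := by
    have : z = 0 := funext hz0
    simp [this]
  rw [heq, this, add_zero]

-- integer vector associated to a pattern element
noncomputable def intVecF (y : Fin d → ℝ) : Fin d → ℤ := fun i => ⌊(Amat M).mulVec y i + 1/2⌋

lemma intVecF_spec {y : Fin d → ℝ} (hy : y ∈ pattern d M) (i : Fin d) :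
    ((intVecF M y) i : ℝ) = (Amat M).mulVec y i := by
  obtain ⟨z, hz⟩ := hy.1 i
  rw [intVecF, hz]
  norm_num

end core2

section fin
variable {d : ℕ} (M : Matrix (Fin d) (Fin d) ℤ) (hM : M.det ≠ 0)

lemma bound_helper (N : Matrix (Fin d) (Fin d) ℝ) (v : Fin d → ℝ) (hv : ∀ j, |v j| ≤ 1/2)
    (i : Fin d) : |N.mulVec v i| ≤ ∑ j, |N i j| := by
  calc |N.mulVec v i| = |∑ j, N i j * v j| := rfl
    _ ≤ ∑ j, |N i j * v j| := Finset.abs_sum_le_sum_abs _ _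
    _ ≤ ∑ j, |N i j| := by
        refine Finset.sum_le_sum fun j _ => ?_
        rw [abs_mul]
        calc |N i j| * |v j| ≤ |N i j| * (1/2) :=
              mul_le_mul_of_nonneg_left (hv j) (abs_nonneg _)
          _ ≤ |N i j| := by nlinarith [abs_nonneg (N i j)]

noncomputable def Bbound : ℤ := ∑ i, ∑ j, |M i j|

lemma Bbound_ge (i : Fin d) : ∑ j, |(M i j : ℝ)| ≤ ((Bbound M : ℤ) : ℝ) := by
  rw [Bbound]
  push_cast
  calc ∑ j, |(M i j : ℝ)| ≤ ∑ i', ∑ j, |(M i' j : ℝ)| := by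
        refine Finset.single_le_sum (f := fun i' => ∑ j, |(M i' j : ℝ)|)
          (fun i' _ => Finset.sum_nonneg fun j _ => abs_nonneg _) (Finset.mem_univ i)
  
lemma BboundT_ge (i : Fin d) : ∑ j, |(M j i : ℝ)| ≤ ((Bbound M : ℤ) : ℝ) := by
  rw [Bbound]
  push_cast
  calc ∑ j, |(M j i : ℝ)| = ∑ j, |(M.transpose i j : ℝ)| := rfl
    _ ≤ ∑ i', ∑ j, |(M.transpose i' j : ℝ)| := by
        refine Finset.single_le_sum (f := fun i' => ∑ j, |(M.transpose i' j : ℝ)|)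
          (fun i' _ => Finset.sum_nonneg fun j _ => abs_nonneg _) (Finset.mem_univ i)
    _ = ∑ i', ∑ j, |(M j i' : ℝ)| := rfl
    _ = ∑ j, ∑ i', |(M j i' : ℝ)| := Finset.sum_comm

lemma boxSet_finite : (Set.univ.pi fun _ : Fin d =>
    (Set.Icc (-(Bbound M)) (Bbound M) : Set ℤ)).Finite :=
  Set.Finite.pi fun _ => Set.finite_Icc _ _

include hM in
lemma A_inv_mul : (Amat M)⁻¹ * (Amat M) = 1 := by
  apply Matrix.nonsing_inv_mul
  rw [Amat_det]
  exact isUnit_iff_ne_zero.mpr (by exact_mod_cast hM)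

include hM in
lemma pattern_finite : (pattern d M).Finite := by
  apply Set.Finite.of_finite_image (f := intVecF M)
  · apply Set.Finite.subset (boxSet_finite M)
    rintro n ⟨y, hy, rfl⟩
    intro i _
    simp only [Set.mem_Icc]
    have h1 : |((intVecF M y) i : ℝ)| ≤ ((Bbound M : ℤ) : ℝ) := by
      rw [intVecF_spec M hy i]
      calc |(Amat M).mulVec y i| ≤ ∑ j, |(Amat M) i j| :=
            bound_helper (Amat M) y (fun j => abs_le.mpr ⟨(hy.2 j).1, le_of_lt (hy.2 j).2⟩) i
        _ = ∑ j, |(M i j : ℝ)| := rfl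
        _ ≤ ((Bbound M : ℤ) : ℝ) := Bbound_ge M i
    have := abs_le.mp h1
    constructor <;> [exact_mod_cast this.1; exact_mod_cast this.2]
  · intro y hy y' hy' heq
    have hA : (Amat M).mulVec y = (Amat M).mulVec y' := by
      funext i
      rw [← intVecF_spec M hy i, ← intVecF_spec M hy' i, heq]
    calc y = ((Amat M)⁻¹ * (Amat M)).mulVec y := by rw [A_inv_mul M hM, Matrix.one_mulVec]
      _ = (Amat M)⁻¹.mulVec ((Amat M).mulVec y) := (Matrix.mulVec_mulVec _ _ _).symm
      _ = (Amat M)⁻¹.mulVec ((Amat M).mulVec y') := by rw [hA]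
      _ = ((Amat M)⁻¹ * (Amat M)).mulVec y' := Matrix.mulVec_mulVec _ _ _
      _ = y' := by rw [A_inv_mul M hM, Matrix.one_mulVec]

include hM in
lemma genSet_finite : (genSet d M).Finite := by
  apply Set.Finite.subset (boxSet_finite M)
  intro h hh
  have hrep : (fun j => (h j : ℝ)) =
      (Amat M).transpose.mulVec (((Amat M).transpose)⁻¹.mulVec fun j => (h j : ℝ)) := by
    rw [Matrix.mulVec_mulVec, AT_mul_inv M hM, Matrix.one_mulVec]
  intro i _
  simp only [Set.mem_Icc]
  have h1 : |(h i : ℝ)| ≤ ((Bbound M : ℤ) : ℝ) := by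
    rw [show (h i : ℝ) = (Amat M).transpose.mulVec
        (((Amat M).transpose)⁻¹.mulVec fun j => (h j : ℝ)) i from congrFun hrep i]
    calc |(Amat M).transpose.mulVec _ i| ≤ ∑ j, |(Amat M).transpose i j| :=
          bound_helper _ _ (fun j => abs_le.mpr ⟨(hh j).1, le_of_lt (hh j).2⟩) i
      _ = ∑ j, |(M j i : ℝ)| := rfl
      _ ≤ ((Bbound M : ℤ) : ℝ) := BboundT_ge M i
  have := abs_le.mp h1
  constructor <;> [exact_mod_cast this.1; exact_mod_cast this.2]

lemma pattern_nonempty : (0 : Fin d → ℝ) ∈ pattern d M := by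
  constructor
  · intro i; exact ⟨0, by simp⟩
  · intro i; constructor <;> norm_num

end fin

section chars
variable {d : ℕ} (M : Matrix (Fin d) (Fin d) ℤ) (hM : M.det ≠ 0)

noncomputable def Echar (t : ℝ) : ℂ := Complex.exp (2 * π * Complex.I * t)

lemma Echar_add (s t : ℝ) : Echar (s + t) = Echar s * Echar t := by
  rw [Echar, Echar, Echar, ← Complex.exp_add]
  push_cast
  ring_nf

lemma Echar_int (m : ℤ) : Echar (m : ℝ) = 1 := by
  rw [Echar]
  have : (2 * ↑π * Complex.I * ((m : ℝ) : ℂ)) = (m : ℂ) * (2 * ↑π * Complex.I) := by push_cast; ring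
  rw [this, Complex.exp_int_mul_two_pi_mul_I]

lemma Echar_zero : Echar 0 = 1 := by simp [Echar]

lemma Echar_norm (t : ℝ) : ‖Echar t‖ = 1 := by
  rw [Echar]
  have : (2 * ↑π * Complex.I * (t : ℂ)) = ((2 * π * t : ℝ) : ℂ) * Complex.I := by push_cast; ring
  rw [this, Complex.norm_exp_ofReal_mul_I]

lemma Echar_eq_one_iff (t : ℝ) : Echar t = 1 ↔ ∃ m : ℤ, t = (m : ℝ) := by
  rw [Echar, Complex.exp_eq_one_iff]
  constructor
  · rintro ⟨n, hn⟩
    refine ⟨n, ?_⟩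
    have h2 : (2 * (π : ℂ) * Complex.I) ≠ 0 := by
      simp [Complex.I_ne_zero, Real.pi_ne_zero, Complex.ofReal_ne_zero]
    have : (t : ℂ) = (n : ℂ) := by
      apply mul_left_cancel₀ h2
      linear_combination hn
    exact_mod_cast this
  · rintro ⟨m, rfl⟩
    exact ⟨m, by push_cast; ring⟩

noncomputable def dotKY (k : Fin d → ℤ) (y : Fin d → ℝ) : ℝ := ∑ i, (k i : ℝ) * y i

lemma dotKY_add_left (k k' : Fin d → ℤ) (y : Fin d → ℝ) :
    dotKY (k + k') y = dotKY k y + dotKY k' y := by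
  simp only [dotKY, Pi.add_apply]
  rw [← Finset.sum_add_distrib]
  congr 1; funext i; push_cast; ring

lemma dotKY_sub_left (k k' : Fin d → ℤ) (y : Fin d → ℝ) :
    dotKY (k - k') y = dotKY k y - dotKY k' y := by
  simp only [dotKY, Pi.sub_apply]
  rw [← Finset.sum_sub_distrib]
  congr 1; funext i; push_cast; ring

lemma dotKY_mulVecT {y : Fin d → ℝ} (hy : y ∈ pattern d M) (z : Fin d → ℤ) :
    dotKY (M.transpose.mulVec z) y = ((∑ j, z j * intVecF M y j : ℤ) : ℝ) := by
  have hterm : ∀ i, (((M.transpose.mulVec z) i : ℤ) : ℝ) * y i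
      = ∑ j, (z j : ℝ) * ((M j i : ℝ) * y i) := by
    intro i
    rw [show ((M.transpose.mulVec z) i : ℝ) = ∑ j, (M j i : ℝ) * (z j : ℝ) from by
      simp only [Matrix.mulVec, dotProduct, Matrix.transpose_apply]; push_cast; rfl]
    rw [Finset.sum_mul]
    congr 1; funext j; ring
  rw [dotKY]
  calc ∑ i, ((M.transpose.mulVec z) i : ℝ) * y i
      = ∑ i, ∑ j, (z j : ℝ) * ((M j i : ℝ) * y i) := Finset.sum_congr rfl fun i _ => hterm i
    _ = ∑ j, ∑ i, (z j : ℝ) * ((M j i : ℝ) * y i) := Finset.sum_comm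
    _ = ∑ j, (z j : ℝ) * ((Amat M).mulVec y j) := by
        refine Finset.sum_congr rfl fun j _ => ?_
        rw [← Finset.mul_sum]
        rfl
    _ = ∑ j, (z j : ℝ) * (intVecF M y j : ℝ) := by
        refine Finset.sum_congr rfl fun j _ => ?_
        rw [intVecF_spec M hy j]
    _ = ((∑ j, z j * intVecF M y j : ℤ) : ℝ) := by push_cast; rfl

lemma dotKY_int_right (k : Fin d → ℤ) (m : Fin d → ℤ) :
    dotKY k (fun i => (m i : ℝ)) = ((∑ i, k i * m i : ℤ) : ℝ) := by
  rw [dotKY]; push_cast; rfl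

end chars

section orth
variable {d : ℕ} (M : Matrix (Fin d) (Fin d) ℤ) (hM : M.det ≠ 0)

lemma reduced_mem (v : Fin d → ℝ) (hv : ∀ i, ∃ z : ℤ, (Amat M).mulVec v i = z) :
    (fun i => v i - ((⌊v i + 1/2⌋ : ℤ) : ℝ)) ∈ pattern d M := by
  constructor
  · intro i
    obtain ⟨z, hz⟩ := hv i
    refine ⟨z - M.mulVec (fun i => ⌊v i + 1/2⌋) i, ?_⟩
    have hsplit : (fun i => v i - ((⌊v i + 1/2⌋ : ℤ) : ℝ))
        = v - fun i => ((⌊v i + 1/2⌋ : ℤ) : ℝ) := rfl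
    rw [hsplit, Matrix.mulVec_sub, Pi.sub_apply, hz,
      ← castMulVec M (fun i => ⌊v i + 1/2⌋) i]
    push_cast
    ring
  · intro i
    exact reduce_mem (v i)

lemma dotKY_reduced (k : Fin d → ℤ) (v : Fin d → ℝ) :
    dotKY k (fun i => v i - ((⌊v i + 1/2⌋ : ℤ) : ℝ))
      = dotKY k v - ((∑ i, k i * ⌊v i + 1/2⌋ : ℤ) : ℝ) := by
  simp only [dotKY]
  push_cast
  rw [← Finset.sum_sub_distrib]
  congr 1; funext i; ring

include hM in
lemma all_int_imp_mem (k : Fin d → ℤ)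
    (hall : ∀ y ∈ pattern d M, ∃ m : ℤ, dotKY k y = (m : ℝ)) :
    ∃ w : Fin d → ℤ, k = M.transpose.mulVec w := by
  set u := ((Amat M).transpose)⁻¹.mulVec (fun j => (k j : ℝ)) with hu
  have hAmulinv : (Amat M) * (Amat M)⁻¹ = 1 := by
    apply Matrix.mul_nonsing_inv
    rw [Amat_det]
    exact isUnit_iff_ne_zero.mpr (by exact_mod_cast hM)
  have huj : ∀ j, ∃ m : ℤ, u j = (m : ℝ) := by
    intro j
    set v := (Amat M)⁻¹.mulVec (Pi.single j (1 : ℝ)) with hv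
    have hAv : (Amat M).mulVec v = Pi.single j (1 : ℝ) := by
      rw [hv, Matrix.mulVec_mulVec, hAmulinv, Matrix.one_mulVec]
    have hvint : ∀ i, ∃ z : ℤ, (Amat M).mulVec v i = z := by
      intro i
      rw [hAv]
      by_cases hij : i = j
      · exact ⟨1, by subst hij; simp⟩
      · exact ⟨0, by simp [Pi.single_apply, hij]⟩
    obtain ⟨m, hm⟩ := hall _ (reduced_mem M v hvint)
    rw [dotKY_reduced] at hm
    have hdot : dotKY k v = (m : ℝ) + ((∑ i, k i * ⌊v i + 1/2⌋ : ℤ) : ℝ) := by linarith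
    refine ⟨m + ∑ i, k i * ⌊v i + 1/2⌋, ?_⟩
    push_cast
    push_cast at hdot
    rw [← hdot]
    -- u j = dotKY k v
    rw [hu, dotKY]
    have hinv : ((Amat M).transpose)⁻¹ = ((Amat M)⁻¹).transpose :=
      (Matrix.transpose_nonsing_inv _).symm
    rw [hinv]
    simp only [Matrix.mulVec, dotProduct, Matrix.transpose_apply, hv,
      Pi.single_apply, mul_ite, mul_one, mul_zero, Finset.sum_ite_eq', Finset.mem_univ, if_true]
    exact Finset.sum_congr rfl fun i _ => by ring
  choose w hw using huj
  refine ⟨w, ?_⟩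
  have hcast : (fun j => (k j : ℝ)) = (Amat M).transpose.mulVec (fun j => (w j : ℝ)) := by
    have h1 : (fun j => (k j : ℝ)) = (Amat M).transpose.mulVec u := by
      rw [hu, Matrix.mulVec_mulVec, AT_mul_inv M hM, Matrix.one_mulVec]
    rw [h1, show u = (fun j => ((w j : ℤ) : ℝ)) from funext hw]
  funext i
  have := congrFun hcast i
  rw [← castMulVecT M w i] at this
  exact_mod_cast this
end orth

section orth2
variable {d : ℕ} (M : Matrix (Fin d) (Fin d) ℤ) (hM : M.det ≠ 0)

lemma dotKY_add_right (k : Fin d → ℤ) (y y' : Fin d → ℝ) :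
    dotKY k (y + y') = dotKY k y + dotKY k y' := by
  simp only [dotKY, Pi.add_apply]
  rw [← Finset.sum_add_distrib]
  congr 1; funext i; ring

lemma dotKY_zero_left (y : Fin d → ℝ) : dotKY (0 : Fin d → ℤ) y = 0 := by
  simp [dotKY]

include hM in
lemma char_sum_zero (k : Fin d → ℤ) (hk : ¬ ∃ w : Fin d → ℤ, k = M.transpose.mulVec w) :
    ∑ y ∈ (pattern_finite M hM).toFinset, Echar (dotKY k y) = 0 := by
  classical
  set T := (pattern_finite M hM).toFinset with hT
  have hmemT : ∀ y, y ∈ T ↔ y ∈ pattern d M := fun y => Set.Finite.mem_toFinset _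
  obtain ⟨y0, hy0mem, hy0⟩ : ∃ y0 ∈ pattern d M, ¬ ∃ m : ℤ, dotKY k y0 = (m : ℝ) := by
    by_contra hc
    push_neg at hc
    exact hk (all_int_imp_mem M hM k hc)
  set φ : (Fin d → ℝ) → (Fin d → ℝ) :=
    fun y => fun i => (y + y0) i - ((⌊(y + y0) i + 1/2⌋ : ℤ) : ℝ) with hφ
  set ψ : (Fin d → ℝ) → (Fin d → ℝ) :=
    fun y => fun i => (y - y0) i - ((⌊(y - y0) i + 1/2⌋ : ℤ) : ℝ) with hψ
  have hφmem : ∀ y ∈ pattern d M, φ y ∈ pattern d M := by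
    intro y hy
    refine reduced_mem M (y + y0) fun i => ?_
    obtain ⟨z1, hz1⟩ := hy.1 i
    obtain ⟨z2, hz2⟩ := hy0mem.1 i
    exact ⟨z1 + z2, by rw [Matrix.mulVec_add, Pi.add_apply, hz1, hz2]; push_cast; ring⟩
  have hψmem : ∀ y ∈ pattern d M, ψ y ∈ pattern d M := by
    intro y hy
    refine reduced_mem M (y - y0) fun i => ?_
    obtain ⟨z1, hz1⟩ := hy.1 i
    obtain ⟨z2, hz2⟩ := hy0mem.1 i
    exact ⟨z1 - z2, by rw [Matrix.mulVec_sub, Pi.sub_apply, hz1, hz2]; push_cast; ring⟩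
  have floor_zero : ∀ y ∈ pattern d M, ∀ i, ⌊y i + 1/2⌋ = (0 : ℤ) := by
    intro y hy i
    have h1 := (hy.2 i).1
    have h2 := (hy.2 i).2
    rw [Int.floor_eq_zero_iff]
    constructor
    · linarith
    · linarith
  have hinv : ∀ y ∈ pattern d M, ψ (φ y) = y := by
    intro y hy
    funext i
    simp only [hψ, hφ, Pi.add_apply, Pi.sub_apply]
    set c := ⌊y i + y0 i + 1/2⌋ with hc
    have : y i + y0 i - (c : ℝ) - y0 i = y i - (c : ℝ) := by ring
    rw [this]
    have hfl : ⌊y i - (c : ℝ) + 1/2⌋ = ⌊y i + 1/2⌋ - c := by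
      rw [show y i - (c : ℝ) + 1/2 = y i + 1/2 - (c : ℝ) by ring, Int.floor_sub_intCast]
    rw [hfl, floor_zero y hy i]
    push_cast
    ring
  have hinv2 : ∀ y ∈ pattern d M, φ (ψ y) = y := by
    intro y hy
    funext i
    simp only [hψ, hφ, Pi.add_apply, Pi.sub_apply]
    set c := ⌊y i - y0 i + 1/2⌋ with hc
    have : y i - y0 i - (c : ℝ) + y0 i = y i - (c : ℝ) := by ring
    rw [this]
    have hfl : ⌊y i - (c : ℝ) + 1/2⌋ = ⌊y i + 1/2⌋ - c := by
      rw [show y i - (c : ℝ) + 1/2 = y i + 1/2 - (c : ℝ) by ring, Int.floor_sub_intCast]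
    rw [hfl, floor_zero y hy i]
    push_cast
    ring
  have hchar : ∀ y ∈ pattern d M,
      Echar (dotKY k (φ y)) = Echar (dotKY k y0) * Echar (dotKY k y) := by
    intro y hy
    have h1 : dotKY k (φ y) = dotKY k y0 +
        (dotKY k y + (((-(∑ i, k i * ⌊(y + y0) i + 1/2⌋)) : ℤ) : ℝ)) := by
      rw [hφ]
      rw [dotKY_reduced k (y + y0), dotKY_add_right]
      push_cast
      ring
    rw [h1, Echar_add, Echar_add, Echar_int, mul_one]
  have hbij : ∑ y ∈ T, Echar (dotKY k (φ y)) = ∑ y ∈ T, Echar (dotKY k y) := by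
    refine Finset.sum_nbij' (i := φ) (j := ψ) ?_ ?_ ?_ ?_ ?_
    · intro y hy; exact (hmemT _).2 (hφmem y ((hmemT y).1 hy))
    · intro y hy; exact (hmemT _).2 (hψmem y ((hmemT y).1 hy))
    · intro y hy; exact hinv y ((hmemT y).1 hy)
    · intro y hy; exact hinv2 y ((hmemT y).1 hy)
    · intro y hy; rfl
  have hmul : Echar (dotKY k y0) * (∑ y ∈ T, Echar (dotKY k y))
      = ∑ y ∈ T, Echar (dotKY k y) := by
    rw [Finset.mul_sum, ← hbij]
    exact Finset.sum_congr rfl fun y hy => (hchar y ((hmemT y).1 hy)).symm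
  have hcne : Echar (dotKY k y0) ≠ 1 := fun hcon => hy0 ((Echar_eq_one_iff _).1 hcon)
  have h0 : (Echar (dotKY k y0) - 1) * (∑ y ∈ T, Echar (dotKY k y)) = 0 := by
    rw [sub_mul, one_mul, hmul, sub_self]
  rcases mul_eq_zero.1 h0 with h | h
  · exact absurd (sub_eq_zero.1 h) hcne
  · exact h

include hM in
lemma orth_sum (h h' : Fin d → ℤ) (hh : h ∈ genSet d M) (hh' : h' ∈ genSet d M) :
    ∑ y ∈ (pattern_finite M hM).toFinset, Echar (dotKY (h - h') y) =
      if h = h' then (((pattern_finite M hM).toFinset.card : ℕ) : ℂ) else 0 := by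
  by_cases he : h = h'
  · rw [if_pos he, he, sub_self]
    rw [Finset.sum_congr rfl fun y _ => by rw [dotKY_zero_left, Echar_zero]]
    rw [Finset.sum_const, nsmul_eq_mul, mul_one]
  · rw [if_neg he]
    apply char_sum_zero M hM
    rintro ⟨w, hw⟩
    exact he (genSet_unique M hM hh hh' w (by rw [← hw]; ring))

include hM in
lemma exists_b (a : (Fin d → ℤ) → ℂ) :
    ∃ b : (Fin d → ℝ) → ℂ, ∀ h ∈ genSet d M,
      ∑ y ∈ (pattern_finite M hM).toFinset, b y * Echar (-(dotKY h y)) = a h := by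
  classical
  set T := (pattern_finite M hM).toFinset with hT
  set G := (genSet_finite M hM).toFinset with hG
  have hTcard : (T.card : ℂ) ≠ 0 := by
    have h0 : (0 : Fin d → ℝ) ∈ T := (Set.Finite.mem_toFinset _).2 (pattern_nonempty M)
    have : T.Nonempty := ⟨0, h0⟩
    exact_mod_cast Finset.card_ne_zero_of_mem h0
  refine ⟨fun y => (T.card : ℂ)⁻¹ * ∑ h' ∈ G, a h' * Echar (dotKY h' y), fun h hh => ?_⟩
  have hhG : h ∈ G := (Set.Finite.mem_toFinset _).2 hh
  calc ∑ y ∈ T, ((T.card : ℂ)⁻¹ * ∑ h' ∈ G, a h' * Echar (dotKY h' y)) * Echar (-(dotKY h y))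
      = ∑ y ∈ T, ∑ h' ∈ G, (T.card : ℂ)⁻¹ * (a h' * Echar (dotKY (h' - h) y)) := by
        refine Finset.sum_congr rfl fun y hy => ?_
        rw [mul_assoc, Finset.sum_mul, Finset.mul_sum]
        refine Finset.sum_congr rfl fun h' _ => ?_
        rw [dotKY_sub_left, show dotKY h' y - dotKY h y = dotKY h' y + -(dotKY h y) by ring,
          Echar_add]
        ring
    _ = (T.card : ℂ)⁻¹ * ∑ h' ∈ G, a h' * ∑ y ∈ T, Echar (dotKY (h' - h) y) := by
        rw [Finset.sum_comm, Finset.mul_sum]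
        refine Finset.sum_congr rfl fun h' _ => ?_
        rw [← Finset.mul_sum, ← Finset.mul_sum]
    _ = (T.card : ℂ)⁻¹ * ∑ h' ∈ G, a h' * (if h' = h then ((T.card : ℕ) : ℂ) else 0) := by
        congr 1
        refine Finset.sum_congr rfl fun h' hh' => ?_
        rw [orth_sum M hM h' h ((Set.Finite.mem_toFinset _).1 hh') hh]
    _ = a h := by
        rw [Finset.sum_congr rfl fun h' _ => by
          rw [mul_ite, mul_zero]]
        rw [Finset.sum_ite_eq' G h (fun h' => a h' * ((T.card : ℕ) : ℂ)), if_pos hhG]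
        field_simp
end orth2


section helpers
variable {d : ℕ}

lemma sum_bound2 {c : (Fin d → ℤ) → ℂ} (hc : Summable c) (A : (Fin d → ℤ) → ℂ) (B : ℝ)
    (hB : ∀ k, ‖A k‖ ≤ B) (u : (Fin d → ℤ) → ℂ) (hu : ∀ k, ‖u k‖ = 1) :
    Summable (fun k => A k * (c k * u k)) := by
  refine Summable.of_norm_bounded
    ((summable_norm_iff.mpr hc).mul_left B) fun k => ?_
  rw [norm_mul, norm_mul, hu k, mul_one]
  exact mul_le_mul_of_nonneg_right (hB k) (norm_nonneg _)

lemma sum_bound {c : (Fin d → ℤ) → ℂ} (hc : Summable c) (A : (Fin d → ℤ) → ℂ) (B : ℝ)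
    (hB : ∀ k, ‖A k‖ ≤ B) : Summable (fun k => A k * c k) := by
  have := sum_bound2 hc A B hB (fun _ => 1) (fun _ => by simp)
  simpa using this

lemma htrans (y : Fin d → ℝ) (k : Fin d → ℤ) (x : Fin d → ℝ) :
    Complex.exp (Complex.I * ∑ i, (k i : ℂ) * ((x i - 2 * π * y i : ℝ) : ℂ)) =
      Echar (-(dotKY k y)) * Complex.exp (Complex.I * ∑ i, (k i : ℂ) * (x i : ℂ)) := by
  rw [Echar, ← Complex.exp_add]
  congr 1
  have h1 : Complex.I * ∑ i, (k i : ℂ) * ((x i - 2 * π * y i : ℝ) : ℂ)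
      = ∑ i, (Complex.I * ((k i : ℂ) * (x i : ℂ)) +
          (-(2 * (π : ℂ) * Complex.I * ((k i : ℂ) * (y i : ℂ))))) := by
    rw [Finset.mul_sum]
    refine Finset.sum_congr rfl fun i _ => ?_
    push_cast
    ring
  rw [h1, Finset.sum_add_distrib]
  have h2 : (2 * (π : ℂ) * Complex.I * ((-(dotKY k y) : ℝ) : ℂ))
      = ∑ i, -(2 * (π : ℂ) * Complex.I * ((k i : ℂ) * (y i : ℂ))) := by
    rw [dotKY]
    push_cast
    rw [← Finset.sum_neg_distrib, Finset.mul_sum]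
    refine Finset.sum_congr rfl fun i _ => by ring
  rw [h2, Finset.mul_sum]
  ring

end helpers

/-- a function `g` (with absolutely convergent Fourier series) lies in
the span of the translates `{f(· − 2πy) : y ∈ P(M)}` if and only if there exist
coefficients `â_h`, `h ∈ G(Mᵀ)`, with `c_{h+Mᵀz}(g) = â_h c_{h+Mᵀz}(f)` for all
`h ∈ G(Mᵀ)` and `z ∈ ℤ^d`. -/
theorem mem_span_translates_iff (d : ℕ) (M : Matrix (Fin d) (Fin d) ℤ) (hM : M.det ≠ 0)
    (f g : (Fin d → ℝ) → ℂ)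
    (hf : Summable (torusCoeff d f)) (hg : Summable (torusCoeff d g))
    (hfrep : ∀ x : Fin d → ℝ, f x = ∑' k : Fin d → ℤ,
      torusCoeff d f k * Complex.exp (Complex.I * ∑ i, (k i : ℂ) * (x i : ℂ)))
    (hgrep : ∀ x : Fin d → ℝ, g x = ∑' k : Fin d → ℤ,
      torusCoeff d g k * Complex.exp (Complex.I * ∑ i, (k i : ℂ) * (x i : ℂ))) :
    g ∈ Submodule.span ℂ
        ((fun y : Fin d → ℝ => fun x : Fin d → ℝ => f fun i => x i - 2 * π * y i) ''
          pattern d M) ↔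
      ∃ a : (Fin d → ℤ) → ℂ, ∀ h ∈ genSet d M, ∀ z : Fin d → ℤ,
        torusCoeff d g (h + M.transpose.mulVec z) =
          a h * torusCoeff d f (h + M.transpose.mulVec z) := by
  classical
  set T := (pattern_finite M hM).toFinset with hT
  have hmemT : ∀ y, y ∈ T ↔ y ∈ pattern d M := fun y => Set.Finite.mem_toFinset _
  constructor
  · -- forward direction
    intro hspan
    have key : ∃ A : (Fin d → ℤ) → ℂ, (∃ B : ℝ, ∀ k, ‖A k‖ ≤ B) ∧
        (∀ (h : Fin d → ℤ) (z : Fin d → ℤ), A (h + M.transpose.mulVec z) = A h) ∧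
        (∀ x, g x = ∑' k : Fin d → ℤ,
          A k * (torusCoeff d f k * Complex.exp (Complex.I * ∑ i, (k i : ℂ) * (x i : ℂ)))) := by
      refine Submodule.span_induction (p := fun g' _ => ∃ A : (Fin d → ℤ) → ℂ,
        (∃ B : ℝ, ∀ k, ‖A k‖ ≤ B) ∧
        (∀ (h : Fin d → ℤ) (z : Fin d → ℤ), A (h + M.transpose.mulVec z) = A h) ∧
        (∀ x, g' x = ∑' k : Fin d → ℤ, A k * (torusCoeff d f k *
          Complex.exp (Complex.I * ∑ i, (k i : ℂ) * (x i : ℂ))))) ?_ ?_ ?_ ?_ hspan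
      · rintro w ⟨y, hy, rfl⟩
        refine ⟨fun k => Echar (-(dotKY k y)), ⟨1, fun k => le_of_eq (Echar_norm _)⟩, ?_, ?_⟩
        · intro h z
          obtain ⟨m, hm⟩ : ∃ m : ℤ, dotKY (M.transpose.mulVec z) y = (m : ℝ) :=
            ⟨_, dotKY_mulVecT M hy z⟩
          show Echar (-(dotKY (h + M.transpose.mulVec z) y)) = Echar (-(dotKY h y))
          rw [dotKY_add_left, hm, neg_add,
            show -(dotKY h y) + -((m : ℤ) : ℝ) = -(dotKY h y) + (((-m : ℤ)) : ℝ) by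
              push_cast; ring,
            Echar_add, Echar_int, mul_one]
        · intro x
          rw [show (fun y : Fin d → ℝ => fun x : Fin d → ℝ => f fun i => x i - 2 * π * y i) y x
              = f (fun i => x i - 2 * π * y i) from rfl,
            hfrep (fun i => x i - 2 * π * y i)]
          refine tsum_congr fun k => ?_
          rw [htrans y k x]
          ring
      · exact ⟨0, ⟨0, by simp⟩, by simp, by simp⟩
      · rintro g1 g2 _ _ ⟨A1, ⟨B1, hB1⟩, hc1, hr1⟩ ⟨A2, ⟨B2, hB2⟩, hc2, hr2⟩
        refine ⟨A1 + A2, ⟨B1 + B2, fun k => (norm_add_le _ _).trans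
          (add_le_add (hB1 k) (hB2 k))⟩, ?_, ?_⟩
        · intro h z
          simp only [Pi.add_apply, hc1 h z, hc2 h z]
        · intro x
          have s1 : Summable (fun k : Fin d → ℤ => A1 k * (torusCoeff d f k *
              Complex.exp (Complex.I * ∑ i, (k i : ℂ) * (x i : ℂ)))) :=
            sum_bound2 hf A1 B1 hB1 _ (fun k => norm_char d k x)
          have s2 : Summable (fun k : Fin d → ℤ => A2 k * (torusCoeff d f k *
              Complex.exp (Complex.I * ∑ i, (k i : ℂ) * (x i : ℂ)))) :=
            sum_bound2 hf A2 B2 hB2 _ (fun k => norm_char d k x)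
          rw [Pi.add_apply, hr1 x, hr2 x, ← Summable.tsum_add s1 s2]
          refine tsum_congr fun k => ?_
          simp only [Pi.add_apply]
          ring
      · rintro r g1 _ ⟨A1, ⟨B1, hB1⟩, hc1, hr1⟩
        refine ⟨r • A1, ⟨‖r‖ * B1, fun k => by
          rw [Pi.smul_apply, norm_smul]
          exact mul_le_mul_of_nonneg_left (hB1 k) (norm_nonneg r)⟩, ?_, ?_⟩
        · intro h z
          simp only [Pi.smul_apply, hc1 h z]
        · intro x
          rw [Pi.smul_apply, hr1 x, smul_eq_mul, ← tsum_mul_left]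
          refine tsum_congr fun k => ?_
          simp only [Pi.smul_apply, smul_eq_mul]
          ring
    obtain ⟨A, ⟨B, hB⟩, hconst, hrepg⟩ := key
    have hext : ∀ k, torusCoeff d g k = A k * torusCoeff d f k := by
      intro k
      exact extract d _ (sum_bound hf A B hB) g
        (fun x => by rw [hrepg x]; exact tsum_congr fun k => by ring) k
    exact ⟨A, fun h hh z => by rw [hext, hconst h z]⟩
  · -- backward direction
    rintro ⟨a, ha⟩
    obtain ⟨b, hb⟩ := exists_b M hM a
    have hcg : ∀ k : Fin d → ℤ, torusCoeff d g k = a (hpart M k) * torusCoeff d f k := by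
      intro k
      have h1 := ha (hpart M k) (hpart_mem M hM k) (zpart M k)
      rw [← hpart_add M k] at h1
      exact h1
    have hEchar : ∀ (k : Fin d → ℤ), ∀ y ∈ pattern d M,
        Echar (-(dotKY (hpart M k) y)) = Echar (-(dotKY k y)) := by
      intro k y hy
      obtain ⟨m, hm⟩ : ∃ m : ℤ, dotKY (M.transpose.mulVec (zpart M k)) y = (m : ℝ) :=
        ⟨_, dotKY_mulVecT M hy _⟩
      conv_rhs => rw [hpart_add M k]
      rw [dotKY_add_left, hm, neg_add,
        show -(dotKY (hpart M k) y) + -((m : ℤ) : ℝ)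
            = -(dotKY (hpart M k) y) + (((-m : ℤ)) : ℝ) by push_cast; ring,
        Echar_add, Echar_int, mul_one]
    have hgx : ∀ x, g x = ∑ y ∈ T, b y * f (fun i => x i - 2 * π * y i) := by
      intro x
      rw [hgrep x]
      calc ∑' k : Fin d → ℤ, torusCoeff d g k *
              Complex.exp (Complex.I * ∑ i, (k i : ℂ) * (x i : ℂ))
          = ∑' k : Fin d → ℤ, ∑ y ∈ T, b y * (torusCoeff d f k *
              Complex.exp (Complex.I * ∑ i, (k i : ℂ) * ((x i - 2 * π * y i : ℝ) : ℂ))) := by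
            refine tsum_congr fun k => ?_
            rw [hcg k, ← hb (hpart M k) (hpart_mem M hM k), hT, Finset.sum_mul, Finset.sum_mul]
            refine Finset.sum_congr rfl fun y hy => ?_
            rw [htrans y k x, hEchar k y ((hmemT y).1 hy)]
            ring
        _ = ∑ y ∈ T, ∑' k : Fin d → ℤ, b y * (torusCoeff d f k *
              Complex.exp (Complex.I * ∑ i, (k i : ℂ) * ((x i - 2 * π * y i : ℝ) : ℂ))) := by
            refine Summable.tsum_finsetSum fun y _ => ?_
            exact sum_bound2 hf (fun _ => b y) ‖b y‖ (fun _ => le_refl _) _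
              (fun k => norm_char d k (fun i => x i - 2 * π * y i))
        _ = ∑ y ∈ T, b y * f (fun i => x i - 2 * π * y i) := by
            refine Finset.sum_congr rfl fun y _ => ?_
            rw [tsum_mul_left, ← hfrep (fun i => x i - 2 * π * y i)]
    have hgfun : g = ∑ y ∈ T, b y •
        (fun x : Fin d → ℝ => f fun i => x i - 2 * π * y i) := by
      funext x
      rw [hgx x, Finset.sum_apply]
      exact Finset.sum_congr rfl fun y _ => rfl
    rw [hgfun]
    exact Submodule.sum_mem _ fun y hy => Submodule.smul_mem _ _
      (Submodule.subset_span ⟨y, (hmemT y).1 hy, rfl⟩)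
end

section
/- Let M ∈ ℤ^{d×d} be regular, m = |det M|, and f ∈ A(𝕋^d). The set of translates {f(· − 2πy) : y ∈ P(M)} is linearly independent in L²(𝕋^d) if and only if for every h ∈ G(Mᵀ) one has Σ_{z∈ℤ^d} |c_{h+Mᵀz}(f)|² > 0. -/
open scoped Real

open scoped ENNReal NNReal
open Complex Matrix

namespace TLI
variable {d : ℕ}

noncomputable def red (v : Fin d → ℝ) : Fin d → ℝ := fun i => Int.fract (v i + 1/2) - 1/2

noncomputable def redInt (v : Fin d → ℝ) : Fin d → ℤ := fun i => ⌊v i + 1/2⌋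

lemma red_apply (v : Fin d → ℝ) (i : Fin d) : red v i = v i - (redInt v i : ℝ) := by
  simp only [red, redInt, Int.fract]
  ring

lemma red_mem (v : Fin d → ℝ) (i : Fin d) : red v i ∈ Set.Ico (-(1/2) : ℝ) (1/2) := by
  have h1 := Int.fract_nonneg (v i + 1/2)
  have h2 := Int.fract_lt_one (v i + 1/2)
  constructor
  · simp only [red]; linarith
  · simp only [red]; linarith

lemma red_eq_self {v : Fin d → ℝ} (h : ∀ i, v i ∈ Set.Ico (-(1/2) : ℝ) (1/2)) : red v = v := by
  funext i
  obtain ⟨h1, h2⟩ := h i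
  have : Int.fract (v i + 1/2) = v i + 1/2 := by
    rw [Int.fract_eq_self]
    constructor <;> [linarith; linarith]
  simp only [red, this]
  ring

lemma Ico_eq_of_int {a b : ℝ} (ha : a ∈ Set.Ico (-(1/2) : ℝ) (1/2))
    (hb : b ∈ Set.Ico (-(1/2) : ℝ) (1/2)) (n : ℤ) (h : a - b = n) : a = b := by
  obtain ⟨ha1, ha2⟩ := ha; obtain ⟨hb1, hb2⟩ := hb
  have h1 : (n : ℝ) < 1 := by linarith
  have h2 : (-1 : ℝ) < n := by linarith
  have : n = 0 := by
    have i1 : n < 1 := by exact_mod_cast h1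
    have i2 : (-1 : ℤ) < n := by exact_mod_cast h2
    omega
  rw [this] at h
  simpa [sub_eq_zero] using h

lemma cast_mulVec (M : Matrix (Fin d) (Fin d) ℤ) (z : Fin d → ℤ) :
    (fun i => ((M.mulVec z) i : ℝ)) = (M.map (Int.cast : ℤ → ℝ)).mulVec (fun j => (z j : ℝ)) := by
  funext i
  simp only [Matrix.mulVec, dotProduct, Matrix.map_apply]
  push_cast
  rfl

variable {M : Matrix (Fin d) (Fin d) ℤ}

lemma detA_isUnit (hM : M.det ≠ 0) : IsUnit (M.map (Int.cast : ℤ → ℝ)).det := by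
  rw [isUnit_iff_ne_zero]
  have hdet : (M.map (Int.cast : ℤ → ℝ)).det = ((M.det : ℤ) : ℝ) := by
    rw [show M.map (Int.cast : ℤ → ℝ) = (Int.castRingHom ℝ).mapMatrix M from rfl,
      ← RingHom.map_det]
    rfl
  rw [hdet]
  exact_mod_cast hM

lemma detAT_isUnit (hM : M.det ≠ 0) :
    IsUnit ((M.map (Int.cast : ℤ → ℝ)).transpose).det := by
  rw [Matrix.det_transpose]; exact detA_isUnit hM

lemma mulVec_inv_cancel (hM : M.det ≠ 0) (v : Fin d → ℝ) :
    (M.map (Int.cast : ℤ → ℝ)).mulVec ((M.map (Int.cast : ℤ → ℝ))⁻¹.mulVec v) = v := by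
  rw [Matrix.mulVec_mulVec, Matrix.mul_nonsing_inv _ (detA_isUnit hM), Matrix.one_mulVec]

lemma inv_mulVec_cancel (hM : M.det ≠ 0) (v : Fin d → ℝ) :
    (M.map (Int.cast : ℤ → ℝ))⁻¹.mulVec ((M.map (Int.cast : ℤ → ℝ)).mulVec v) = v := by
  rw [Matrix.mulVec_mulVec, Matrix.nonsing_inv_mul _ (detA_isUnit hM), Matrix.one_mulVec]

lemma mulVecT_inv_cancel (hM : M.det ≠ 0) (v : Fin d → ℝ) :
    ((M.map (Int.cast : ℤ → ℝ)).transpose)⁻¹.mulVec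
      (((M.map (Int.cast : ℤ → ℝ)).transpose).mulVec v) = v := by
  rw [Matrix.mulVec_mulVec, Matrix.nonsing_inv_mul _ (detAT_isUnit hM), Matrix.one_mulVec]

lemma zero_mem_pattern : (0 : Fin d → ℝ) ∈ pattern d M := by
  constructor
  · intro i; exact ⟨0, by simp⟩
  · intro i; constructor <;> norm_num

/-- reduction preserves having-integer-image -/
lemma red_mem_pattern {v : Fin d → ℝ}
    (hv : ∀ i, ∃ z : ℤ, (M.map (Int.cast : ℤ → ℝ)).mulVec v i = z) :
    red v ∈ pattern d M := by
  have hred : red v = v - fun i => (redInt v i : ℝ) := by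
    funext i; simp [red_apply, Pi.sub_apply]

  constructor
  · intro i
    obtain ⟨z, hz⟩ := hv i
    refine ⟨z - M.mulVec (redInt v) i, ?_⟩
    rw [hred, Matrix.mulVec_sub, ← cast_mulVec]
    simp only [Pi.sub_apply, hz]
    push_cast
    ring
  · intro i; exact red_mem v i

lemma add_mem_int {y y0 : Fin d → ℝ} (hy : y ∈ pattern d M) (hy0 : y0 ∈ pattern d M) (i : Fin d) :
    ∃ z : ℤ, (M.map (Int.cast : ℤ → ℝ)).mulVec (y + y0) i = z := by
  obtain ⟨z1, hz1⟩ := hy.1 i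
  obtain ⟨z2, hz2⟩ := hy0.1 i
  refine ⟨z1 + z2, ?_⟩
  rw [Matrix.mulVec_add]
  simp only [Pi.add_apply, hz1, hz2]
  push_cast
  ring




/-- complex exponential character `e^{i⟨k,x⟩}` -/
noncomputable def ER (k : Fin d → ℤ) (x : Fin d → ℝ) : ℂ :=
  Complex.exp (Complex.I * ∑ i, (k i : ℂ) * (x i : ℂ))

/-- `e^{-2πi⟨k,y⟩}` -/
noncomputable def ch (k : Fin d → ℤ) (y : Fin d → ℝ) : ℂ :=
  Complex.exp (((-(2 * π * ∑ i, (k i : ℝ) * y i)) : ℝ) * Complex.I)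

lemma abs_exp_real_mul_I (r : ℝ) : ‖Complex.exp ((r : ℂ) * Complex.I)‖ = 1 := by
  rw [Complex.norm_exp]
  simp

lemma abs_ch (k : Fin d → ℤ) (y : Fin d → ℝ) : ‖ch k y‖ = 1 :=
  abs_exp_real_mul_I _

lemma abs_ER (k : Fin d → ℤ) (x : Fin d → ℝ) : ‖ER k x‖ = 1 := by
  have : (Complex.I * ∑ i, (k i : ℂ) * (x i : ℂ)) = ((∑ i, (k i : ℝ) * x i : ℝ) : ℂ) * Complex.I := by
    push_cast; ring
  rw [ER, this, abs_exp_real_mul_I]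

lemma ER_add (k k' : Fin d → ℤ) (x : Fin d → ℝ) : ER (k + k') x = ER k x * ER k' x := by
  rw [ER, ER, ER, ← Complex.exp_add]
  congr 1
  have hs : ∑ i, (((k + k') i : ℤ) : ℂ) * (x i : ℂ)
      = ∑ i, ((k i : ℂ) * (x i : ℂ) + (k' i : ℂ) * (x i : ℂ)) :=
    Finset.sum_congr rfl fun i _ => by simp only [Pi.add_apply]; push_cast; ring
  rw [hs, Finset.sum_add_distrib]
  ring

lemma ch_add (k k' : Fin d → ℤ) (y : Fin d → ℝ) : ch (k + k') y = ch k y * ch k' y := by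
  rw [ch, ch, ch, ← Complex.exp_add]
  congr 1
  have hs : ∑ i, (((k + k') i : ℤ) : ℝ) * y i
      = (∑ i, (k i : ℝ) * y i) + ∑ i, (k' i : ℝ) * y i := by
    rw [← Finset.sum_add_distrib]
    exact Finset.sum_congr rfl fun i _ => by simp only [Pi.add_apply]; push_cast; ring
  rw [hs]
  push_cast
  ring

lemma ch_zero (y : Fin d → ℝ) : ch 0 y = 1 := by
  simp [ch]

lemma ch_ne_zero (k : Fin d → ℤ) (y : Fin d → ℝ) : ch k y ≠ 0 := Complex.exp_ne_zero _

lemma ch_eq_one_of_int (k : Fin d → ℤ) (y : Fin d → ℝ) (n : ℤ)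
    (h : ∑ i, (k i : ℝ) * y i = n) : ch k y = 1 := by
  rw [ch, h]
  rw [show (((-(2 * π * (n:ℝ))) : ℝ) : ℂ) * Complex.I = (-n : ℤ) * (2 * ↑π * Complex.I) by
    push_cast; ring]
  exact Complex.exp_int_mul_two_pi_mul_I _

/-- the key translation identity -/
lemma ER_translate (k : Fin d → ℤ) (x y : Fin d → ℝ) :
    ER k (fun i => x i - 2 * π * y i) = ch k y * ER k x := by
  rw [ER, ER, ch, ← Complex.exp_add]
  congr 1
  push_cast
  have hs : ∑ i, Complex.I * ((k i : ℂ) * ((x i : ℂ) - 2 * (π:ℂ) * (y i : ℂ)))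
      = ∑ i, (Complex.I * ((k i : ℂ) * (x i : ℂ)) - 2 * (π:ℂ) * ((k i : ℂ) * (y i : ℂ)) * Complex.I) :=
    Finset.sum_congr rfl fun i _ => by ring
  rw [Finset.mul_sum, hs, Finset.sum_sub_distrib]
  have h2 : ∑ i, 2 * (π:ℂ) * ((k i : ℂ) * (y i : ℂ)) * Complex.I
      = (2 * (π:ℂ) * ∑ i, (k i : ℂ) * (y i : ℂ)) * Complex.I := by
    rw [Finset.mul_sum, Finset.sum_mul]
  have h3 : ∑ i, Complex.I * ((k i : ℂ) * (x i : ℂ))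
      = Complex.I * ∑ i, (k i : ℂ) * (x i : ℂ) := (Finset.mul_sum _ _ _).symm
  rw [h2, h3]
  ring



lemma pattern_finite (hM : M.det ≠ 0) : (pattern d M).Finite := by
  classical
  set A := M.map (Int.cast : ℤ → ℝ) with hA
  set φ : (Fin d → ℝ) → (Fin d → ℤ) := fun y i => ⌊A.mulVec y i⌋ with hφ
  have hinj : Set.InjOn φ (pattern d M) := by
    intro y hy y' hy' heq
    have hAy : A.mulVec y = A.mulVec y' := by
      funext i
      obtain ⟨z, hz⟩ := hy.1 i
      obtain ⟨z', hz'⟩ := hy'.1 i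
      have h1 : φ y i = z := by rw [hφ]; simp [hA, hz]
      have h2 : φ y' i = z' := by rw [hφ]; simp [hA, hz']
      rw [hz, hz']
      have : z = z' := by rw [← h1, ← h2, heq]
      exact_mod_cast this
    have := congrArg (fun v => A⁻¹.mulVec v) hAy
    simpa [hA, Matrix.nonsing_inv_mul _ (detA_isUnit hM)] using this
  have himg : (φ '' pattern d M).Finite := by
    apply Set.Finite.subset
      (Set.Finite.pi fun i => Set.finite_Icc (-(⌈∑ j, |(M i j : ℝ)|⌉ : ℤ) : ℤ) ⌈∑ j, |(M i j : ℝ)|⌉)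
    rintro _ ⟨y, hy, rfl⟩
    intro i _
    obtain ⟨z, hz⟩ := hy.1 i
    have h1 : φ y i = z := by rw [hφ]; simp [hA, hz]
    have habs : |A.mulVec y i| ≤ ∑ j, |(M i j : ℝ)| := by
      calc |A.mulVec y i| = |∑ j, A i j * y j| := rfl
        _ ≤ ∑ j, |A i j * y j| := Finset.abs_sum_le_sum_abs _ _
        _ ≤ ∑ j, |(M i j : ℝ)| := by
            apply Finset.sum_le_sum
            intro j _
            rw [abs_mul]
            have hyj : |y j| ≤ 1 := by
              obtain ⟨u1, u2⟩ := hy.2 j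
              rw [abs_le]; constructor <;> linarith
            have : |A i j| = |(M i j : ℝ)| := by rw [hA]; simp [Matrix.map_apply]
            rw [this]
            nlinarith [abs_nonneg ((M i j : ℝ))]
    rw [hz] at habs
    rw [abs_le] at habs
    constructor
    · have : -(⌈∑ j, |(M i j : ℝ)|⌉ : ℝ) ≤ (z : ℝ) := by
        have := Int.le_ceil (∑ j, |(M i j : ℝ)|)
        linarith [habs.1]
      rw [h1]; exact_mod_cast this
    · have : (z : ℝ) ≤ (⌈∑ j, |(M i j : ℝ)|⌉ : ℝ) := le_trans habs.2 (Int.le_ceil _)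
      rw [h1]; exact_mod_cast this
  exact Set.Finite.of_finite_image himg hinj

lemma ch_sub_int (k : Fin d → ℤ) (v : Fin d → ℝ) (n : Fin d → ℤ) :
    ch k (fun i => v i - (n i : ℝ)) = ch k v := by
  have hs : ∑ i, (k i : ℝ) * (v i - (n i : ℝ))
      = (∑ i, (k i : ℝ) * v i) - ((∑ i, k i * n i : ℤ) : ℝ) := by
    push_cast
    rw [← Finset.sum_sub_distrib]
    exact Finset.sum_congr rfl fun i _ => by ring
  rw [ch, hs]
  rw [show ((-(2 * π * ((∑ i, (k i : ℝ) * v i) - ((∑ i, k i * n i : ℤ) : ℝ))) : ℝ) : ℂ) * Complex.I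
      = ((-(2 * π * ∑ i, (k i : ℝ) * v i) : ℝ) : ℂ) * Complex.I
        + ((∑ i, k i * n i : ℤ) : ℂ) * (2 * (π : ℂ) * Complex.I) by push_cast; ring]
  rw [Complex.exp_add, Complex.exp_int_mul_two_pi_mul_I, mul_one]
  rfl

lemma ch_red (k : Fin d → ℤ) (v : Fin d → ℝ) : ch k (red v) = ch k v := by
  have : red v = fun i => v i - (redInt v i : ℝ) := by funext i; exact red_apply v i
  rw [this, ch_sub_int]

lemma ch_transpose_mulVec {y : Fin d → ℝ} (hy : y ∈ pattern d M) (z : Fin d → ℤ) :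
    ch (M.transpose.mulVec z) y = 1 := by
  classical
  set A := M.map (Int.cast : ℤ → ℝ) with hA
  choose p hp using hy.1
  refine ch_eq_one_of_int _ _ (∑ j, z j * p j) ?_
  have step1 : ∑ i, ((M.transpose.mulVec z) i : ℝ) * y i
      = ∑ j, (z j : ℝ) * (A.mulVec y j) := by
    simp only [Matrix.mulVec, dotProduct, Matrix.transpose_apply]
    push_cast
    have L : ∀ x : Fin d, (∑ x1, ((M x1 x : ℝ)) * (z x1 : ℝ)) * y x
        = ∑ x1, ((M x1 x : ℝ)) * (z x1 : ℝ) * y x := fun x => Finset.sum_mul _ _ _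
    rw [Finset.sum_congr rfl fun x _ => L x, Finset.sum_comm]
    refine Finset.sum_congr rfl fun j _ => ?_
    rw [Finset.mul_sum]
    refine Finset.sum_congr rfl fun i _ => ?_
    rw [hA]
    simp only [Matrix.map_apply]
    push_cast
    ring
  rw [step1]
  push_cast
  refine Finset.sum_congr rfl fun j _ => ?_
  rw [hp j]


lemma red_sub_int (v : Fin d → ℝ) (n : Fin d → ℤ) :
    red (fun i => v i - (n i : ℝ)) = red v := by
  funext i
  simp only [red]
  rw [show v i - (n i : ℝ) + 1/2 = (v i + 1/2) - (n i : ℝ) by ring, Int.fract_sub_intCast]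

lemma ch_add_right (k : Fin d → ℤ) (y y0 : Fin d → ℝ) :
    ch k (y + y0) = ch k y * ch k y0 := by
  rw [ch, ch, ch, ← Complex.exp_add]
  congr 1
  have hs : ∑ i, (k i : ℝ) * (y + y0) i
      = (∑ i, (k i : ℝ) * y i) + ∑ i, (k i : ℝ) * y0 i := by
    rw [← Finset.sum_add_distrib]
    exact Finset.sum_congr rfl fun i _ => by simp only [Pi.add_apply]; ring
  rw [hs]
  push_cast
  ring

lemma int_of_ch_eq_one {k : Fin d → ℤ} {y : Fin d → ℝ} (h : ch k y = 1) :
    ∃ n : ℤ, ∑ i, (k i : ℝ) * y i = n := by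
  rw [ch, Complex.exp_eq_one_iff] at h
  obtain ⟨n, hn⟩ := h
  refine ⟨-n, ?_⟩
  have h2 : (((n : ℝ) * (2 * π) : ℝ) : ℂ) * Complex.I
      = ((-(2 * π * ∑ i, (k i : ℝ) * y i) : ℝ) : ℂ) * Complex.I := by
    rw [hn]; push_cast; ring
  have h3 := mul_right_cancel₀ Complex.I_ne_zero h2
  have h4 : (n : ℝ) * (2 * π) = -(2 * π * ∑ i, (k i : ℝ) * y i) := by exact_mod_cast h3
  have h2π : (2 * π : ℝ) ≠ 0 := by positivity
  have h5 : (2 * π : ℝ) * (∑ i, (k i : ℝ) * y i - (-n : ℤ)) = 0 := by push_cast; linarith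
  have h6 := (mul_eq_zero.mp h5).resolve_left h2π
  push_cast at h6 ⊢
  linarith

lemma exists_y0 (hM : M.det ≠ 0) {w : Fin d → ℤ}
    (hw : ¬ ∃ z : Fin d → ℤ, w = M.transpose.mulVec z) :
    ∃ y0 ∈ pattern d M, ch w y0 ≠ 1 := by
  classical
  set A := M.map (Int.cast : ℤ → ℝ) with hA
  set v := (A.transpose)⁻¹.mulVec (fun j => (w j : ℝ)) with hv
  have hATint : ∀ z : Fin d → ℤ,
      (fun i => ((M.transpose.mulVec z) i : ℝ)) = A.transpose.mulVec (fun j => (z j : ℝ)) := by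
    intro z
    rw [cast_mulVec, Matrix.transpose_map]
  have hi0 : ∃ i0, ¬ ∃ z : ℤ, v i0 = z := by
    by_contra hcon
    push_neg at hcon
    choose zz hzz using hcon
    apply hw
    refine ⟨zz, ?_⟩
    have hcv : v = fun j => ((zz j : ℤ) : ℝ) := funext fun i => hzz i
    have : (fun j => (w j : ℝ)) = A.transpose.mulVec (fun j => ((zz j : ℤ) : ℝ)) := by
      rw [← hcv, hv]
      rw [Matrix.mulVec_mulVec, Matrix.mul_nonsing_inv _ (detAT_isUnit hM), Matrix.one_mulVec]
    rw [← hATint] at this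
    funext j
    exact_mod_cast congrFun this j
  obtain ⟨i0, hi0⟩ := hi0
  set u := A⁻¹.mulVec (Pi.single i0 1) with hu
  have hu_int : ∀ j, ∃ z : ℤ, A.mulVec u j = z := by
    intro j
    rw [hu, Matrix.mulVec_mulVec, Matrix.mul_nonsing_inv _ (detA_isUnit hM), Matrix.one_mulVec]
    refine ⟨if j = i0 then 1 else 0, ?_⟩
    by_cases h : j = i0 <;> simp [Pi.single_apply, h]
  refine ⟨red u, red_mem_pattern hu_int, ?_⟩
  intro hone
  rw [ch_red] at hone
  obtain ⟨n, hn⟩ := int_of_ch_eq_one hone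
  have hvu : v i0 = ∑ i, (w i : ℝ) * u i := by
    have h1 : ∑ i, (w i : ℝ) * u i
        = (fun j => (w j : ℝ)) ⬝ᵥ (A⁻¹.mulVec (Pi.single i0 1)) := rfl
    rw [h1, Matrix.dotProduct_mulVec, dotProduct_single, mul_one,
      ← Matrix.mulVec_transpose, Matrix.transpose_nonsing_inv, hv]
  exact hi0 ⟨n, by rw [hvu, hn]⟩

lemma exists_genSet_rep (hM : M.det ≠ 0) (k : Fin d → ℤ) :
    ∃ h ∈ genSet d M, ∃ z : Fin d → ℤ, k = h + M.transpose.mulVec z := by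
  classical
  have hATint : ∀ z : Fin d → ℤ,
      (fun i => ((M.transpose.mulVec z) i : ℝ))
        = (M.map (Int.cast : ℤ → ℝ)).transpose.mulVec (fun j => (z j : ℝ)) := by
    intro z; rw [cast_mulVec, Matrix.transpose_map]
  set v := ((M.map (Int.cast : ℤ → ℝ)).transpose)⁻¹.mulVec (fun j => (k j : ℝ)) with hv
  refine ⟨k - M.transpose.mulVec (redInt v), ?_, redInt v, by ring⟩
  intro i
  have hcast : (fun j => (((k - M.transpose.mulVec (redInt v)) j : ℤ) : ℝ))
      = (fun j => (k j : ℝ))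
        - (M.map (Int.cast : ℤ → ℝ)).transpose.mulVec (fun j => ((redInt v j : ℤ) : ℝ)) := by
    funext j
    simp only [Pi.sub_apply]
    rw [← congrFun (hATint (redInt v)) j]
    push_cast
    ring
  rw [hcast, Matrix.mulVec_sub]
  have h2 : ((M.map (Int.cast : ℤ → ℝ)).transpose)⁻¹.mulVec
      ((M.map (Int.cast : ℤ → ℝ)).transpose.mulVec fun j => ((redInt v j : ℤ) : ℝ))
      = fun j => ((redInt v j : ℤ) : ℝ) := by
    rw [Matrix.mulVec_mulVec, Matrix.nonsing_inv_mul _ (detAT_isUnit hM), Matrix.one_mulVec]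
  rw [h2]
  simp only [Pi.sub_apply, ← hv]
  rw [← red_apply]
  exact red_mem v i


lemma sub_mem_int {y : Fin d → ℝ} {y0 : Fin d → ℝ} (hy : y ∈ pattern d M)
    (hy0 : y0 ∈ pattern d M) (i : Fin d) :
    ∃ z : ℤ, (M.map (Int.cast : ℤ → ℝ)).mulVec (y - y0) i = z := by
  obtain ⟨z1, hz1⟩ := hy.1 i
  obtain ⟨z2, hz2⟩ := hy0.1 i
  refine ⟨z1 - z2, ?_⟩
  rw [Matrix.mulVec_sub]
  simp only [Pi.sub_apply, hz1, hz2]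
  push_cast
  ring

lemma sum_ch_eq_zero (hM : M.det ≠ 0) [Fintype (pattern d M)] {w : Fin d → ℤ}
    (hw : ¬ ∃ z : Fin d → ℤ, w = M.transpose.mulVec z) :
    ∑ y : pattern d M, ch w (y : Fin d → ℝ) = 0 := by
  classical
  obtain ⟨y0, hy0, hne⟩ := exists_y0 hM hw
  set T : pattern d M → pattern d M :=
    fun y => ⟨red ((y : Fin d → ℝ) + y0), red_mem_pattern (add_mem_int y.2 hy0)⟩ with hT
  set T' : pattern d M → pattern d M :=
    fun y => ⟨red ((y : Fin d → ℝ) - y0), red_mem_pattern (sub_mem_int y.2 hy0)⟩ with hT'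
  have hred_add : ∀ v : Fin d → ℝ, ∀ n : Fin d → ℤ, red (fun i => v i + (n i : ℝ)) = red v := by
    intro v n
    have : (fun i => v i + (n i : ℝ)) = fun i => v i - ((-(n i) : ℤ) : ℝ) := by
      funext i; push_cast; ring
    rw [this]
    exact red_sub_int v (fun i => -(n i))
  have hTT' : ∀ y, T (T' y) = y := by
    intro y
    apply Subtype.ext
    show red (red ((y : Fin d → ℝ) - y0) + y0) = (y : Fin d → ℝ)
    have h2 : red ((y : Fin d → ℝ) - y0) + y0
        = fun i => (y : Fin d → ℝ) i - (redInt ((y : Fin d → ℝ) - y0) i : ℝ) := by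
      funext i
      simp only [Pi.add_apply, red_apply, Pi.sub_apply]
      ring
    rw [h2, red_sub_int, red_eq_self y.2.2]
  have hT'T : ∀ y, T' (T y) = y := by
    intro y
    apply Subtype.ext
    show red (red ((y : Fin d → ℝ) + y0) - y0) = (y : Fin d → ℝ)
    have h2 : red ((y : Fin d → ℝ) + y0) - y0
        = fun i => (y : Fin d → ℝ) i - (redInt ((y : Fin d → ℝ) + y0) i : ℝ) := by
      funext i
      simp only [Pi.add_apply, red_apply, Pi.sub_apply]
      ring
    rw [h2, red_sub_int, red_eq_self y.2.2]
  have hbij : Function.Bijective T :=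
    Function.bijective_iff_has_inverse.mpr ⟨T', hT'T, hTT'⟩
  have hstep : ∀ y : pattern d M, ch w ((T y : Fin d → ℝ)) = ch w (y : Fin d → ℝ) * ch w y0 := by
    intro y
    show ch w (red ((y : Fin d → ℝ) + y0)) = _
    rw [ch_red, ch_add_right]
  have hsum := Function.Bijective.sum_comp hbij (fun y : pattern d M => ch w (y : Fin d → ℝ))
  have : ∑ y : pattern d M, ch w (y : Fin d → ℝ)
      = (∑ y : pattern d M, ch w (y : Fin d → ℝ)) * ch w y0 := by
    conv_lhs => rw [← hsum]
    rw [Finset.sum_mul]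
    exact Finset.sum_congr rfl fun y _ => hstep y
  have hfac : (∑ y : pattern d M, ch w (y : Fin d → ℝ)) * (1 - ch w y0) = 0 := by
    rw [mul_sub, mul_one, ← this, sub_self]
  rcases mul_eq_zero.mp hfac with h | h
  · exact h
  · exact absurd (sub_eq_zero.mp h).symm hne


lemma sum_single_mul (i : Fin d) (y : Fin d → ℝ) :
    ∑ j, ((Pi.single i 1 : Fin d → ℤ) j : ℝ) * y j = y i := by
  rw [Finset.sum_eq_single i]
  · simp
  · intro b _ hb
    simp [Pi.single_apply, hb]
  · simp

lemma box_eq_of_ch_single {y y' : Fin d → ℝ} (hy : ∀ i, y i ∈ Set.Ico (-(1/2) : ℝ) (1/2))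
    (hy' : ∀ i, y' i ∈ Set.Ico (-(1/2) : ℝ) (1/2)) (i : Fin d)
    (h : ch (Pi.single i 1) y = ch (Pi.single i 1) y') : y i = y' i := by
  rw [ch, ch, sum_single_mul, sum_single_mul, Complex.exp_eq_exp_iff_exists_int] at h
  obtain ⟨n, hn⟩ := h
  have h2 : (((-(2 * π * y i)) : ℝ) : ℂ) * Complex.I
      = (((-(2 * π * y' i) + (n : ℝ) * (2 * π)) : ℝ) : ℂ) * Complex.I := by
    rw [hn]; push_cast; ring
  have h3 := mul_right_cancel₀ Complex.I_ne_zero h2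
  have h4 : -(2 * π * y i) = -(2 * π * y' i) + (n : ℝ) * (2 * π) := by exact_mod_cast h3
  apply Ico_eq_of_int (hy i) (hy' i) (-n)
  have h2π : (2 * π : ℝ) ≠ 0 := by positivity
  have h5 : (2 * π : ℝ) * (y i - y' i - ((-n : ℤ) : ℝ)) = 0 := by push_cast; linarith
  have h6 := (mul_eq_zero.mp h5).resolve_left h2π
  linarith [h6]

noncomputable def chHom (y : Fin d → ℝ) : Multiplicative (Fin d → ℤ) →* ℂ where
  toFun k := ch (Multiplicative.toAdd k) y
  map_one' := by
    show ch (Multiplicative.toAdd 1) y = 1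
    rw [toAdd_one]
    exact ch_zero y
  map_mul' k k' := by
    show ch (Multiplicative.toAdd (k * k')) y = _
    rw [toAdd_mul, ch_add]

lemma eq_zero_of_forall_sum_ch [Fintype (pattern d M)] (g : pattern d M → ℂ)
    (h : ∀ k : Fin d → ℤ, ∑ y : pattern d M, g y * ch k (y : Fin d → ℝ) = 0) :
    ∀ y, g y = 0 := by
  classical
  have hinj : Function.Injective (fun y : pattern d M => chHom (y : Fin d → ℝ)) := by
    intro y y' hyy
    refine Subtype.ext (funext fun i => box_eq_of_ch_single y.2.2 y'.2.2 i ?_)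
    exact DFunLike.congr_fun hyy (Multiplicative.ofAdd (Pi.single i 1))
  have hli := (linearIndependent_monoidHom (Multiplicative (Fin d → ℤ)) ℂ).comp
      (fun y : pattern d M => chHom (y : Fin d → ℝ)) hinj
  refine Fintype.linearIndependent_iff.mp hli g ?_
  funext k
  rw [Finset.sum_apply]
  simp only [Function.comp_apply, Pi.smul_apply, smul_eq_mul, Pi.zero_apply]
  exact h (Multiplicative.toAdd k)


lemma norm_ER (k : Fin d → ℤ) (x : Fin d → ℝ) : ‖ER k x‖ = 1 := by
  exact abs_ER k x

lemma nnnorm_ER (k : Fin d → ℤ) (x : Fin d → ℝ) : ‖ER k x‖₊ = 1 :=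
  NNReal.coe_injective (by simp [coe_nnnorm, abs_ER])

open MeasureTheory in
lemma int1d (w : ℤ) :
    ∫ t in Set.Ioc (0:ℝ) (2*π), Complex.exp (Complex.I * (w : ℂ) * (t : ℂ))
      = if w = 0 then (((2*π : ℝ)) : ℂ) else 0 := by
  split_ifs with hw
  · subst hw
    simp only [Int.cast_zero, mul_zero, zero_mul, Complex.exp_zero]
    rw [setIntegral_const]
    rw [measureReal_def, Real.volume_Ioc]
    rw [show (2*π - 0 : ℝ) = 2*π by ring, ENNReal.toReal_ofReal (by positivity)]
    simp
  · have h0 : (0:ℝ) ≤ 2*π := by positivity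
    rw [← intervalIntegral.integral_of_le h0]
    have hc : (Complex.I * (w : ℂ)) ≠ 0 :=
      mul_ne_zero Complex.I_ne_zero (Int.cast_ne_zero.mpr hw)
    rw [show (fun t : ℝ => Complex.exp (Complex.I * (w : ℂ) * (t : ℂ)))
        = fun t : ℝ => Complex.exp ((Complex.I * (w : ℂ)) * (t : ℂ)) from rfl]
    rw [integral_exp_mul_complex hc]
    rw [show (Complex.I * (w : ℂ)) * ((2*π : ℝ) : ℂ) = (w : ℂ) * (2 * (π : ℂ) * Complex.I) by
      push_cast; ring]
    rw [Complex.exp_int_mul_two_pi_mul_I]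
    simp

open MeasureTheory in
lemma fourier_unique {b : (Fin d → ℤ) → ℂ} (hb : Summable fun k => ‖b k‖)
    (h : ∀ x : Fin d → ℝ, ∑' k, b k * ER k x = 0) (k0 : Fin d → ℤ) : b k0 = 0 := by
  classical
  set Box : Set (Fin d → ℝ) := Set.univ.pi fun _ => Set.Ioc (0:ℝ) (2*π) with hBox
  have hBoxMeas : MeasurableSet Box := MeasurableSet.univ_pi fun i => measurableSet_Ioc
  set G : ℤ → ℝ → ℂ :=
    fun w => (Set.Ioc (0:ℝ) (2*π)).indicator
      (fun t => Complex.exp (Complex.I * (w : ℂ) * (t : ℂ))) with hG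
  set F : (Fin d → ℤ) → (Fin d → ℝ) → ℂ :=
    fun k => Box.indicator (fun x => b k * ER (k - k0) x) with hF
  have hzero : ∀ x, ∑' k, F k x = 0 := by
    intro x
    by_cases hx : x ∈ Box
    · have hterm : ∀ k, F k x = (b k * ER k x) * ER (-k0) x := by
        intro k
        rw [hF]
        simp only
        rw [Set.indicator_of_mem hx,
          show k - k0 = k + (-k0) from sub_eq_add_neg k k0, ER_add]
        ring
      rw [tsum_congr hterm, tsum_mul_right, h x, zero_mul]
    · simp [hF, Set.indicator_of_notMem hx]
  have hmeas : ∀ k : Fin d → ℤ, AEStronglyMeasurable (F k) (volume : Measure (Fin d → ℝ)) := by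
    intro k
    apply AEStronglyMeasurable.indicator _ hBoxMeas
    apply Continuous.aestronglyMeasurable
    apply Continuous.mul continuous_const
    apply Complex.continuous_exp.comp
    apply Continuous.mul continuous_const
    exact continuous_finset_sum _ fun i _ =>
      continuous_const.mul (Complex.continuous_ofReal.comp (continuous_apply i))
  have hBoxVol : (volume : Measure (Fin d → ℝ)) Box = (ENNReal.ofReal (2*π))^d := by
    rw [hBox, volume_pi_pi]
    simp [Real.volume_Ioc]
  have hlint : ∀ k, ∫⁻ x, ‖F k x‖₊ ∂(volume : Measure (Fin d → ℝ))
      = (‖b k‖₊ : ℝ≥0∞) * (ENNReal.ofReal (2*π))^d := by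
    intro k
    have hpt : (fun x => ((‖F k x‖₊ : ℝ≥0∞)))
        = fun x => Box.indicator (fun _ => ((‖b k‖₊ : ℝ≥0∞))) x := by
      funext x
      by_cases hx : x ∈ Box
      · rw [hF]
        simp only
        rw [Set.indicator_of_mem hx, Set.indicator_of_mem hx]
        rw [nnnorm_mul, nnnorm_ER, mul_one]
      · rw [hF]
        simp only
        rw [Set.indicator_of_notMem hx, Set.indicator_of_notMem hx]
        simp
    rw [hpt, lintegral_indicator_const hBoxMeas, hBoxVol]
  have hf' : ∑' k, ∫⁻ x, ‖F k x‖₊ ∂(volume : Measure (Fin d → ℝ)) ≠ ⊤ := by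
    rw [tsum_congr hlint, ENNReal.tsum_mul_right]
    apply ENNReal.mul_ne_top
    · rw [ENNReal.tsum_coe_ne_top_iff_summable]
      exact NNReal.summable_coe.mp (by simpa [coe_nnnorm] using hb)
    · exact ENNReal.pow_ne_top ENNReal.ofReal_ne_top
  have hswap := integral_tsum hmeas hf'
  have hlhs : ∫ x : Fin d → ℝ, ∑' k, F k x = 0 := by
    simp only [hzero]
    exact integral_zero _ _
  -- compute each integral
  have hFfac : ∀ k, F k = fun x => b k * ∏ i, G ((k - k0) i) (x i) := by
    intro k
    funext x
    by_cases hx : x ∈ Box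
    · rw [hF]
      simp only
      rw [Set.indicator_of_mem hx]
      have hxI : ∀ i, x i ∈ Set.Ioc (0:ℝ) (2*π) := by
        intro i
        have := hx
        rw [hBox, Set.mem_univ_pi] at this
        exact this i
      have hGx : ∀ i, G ((k - k0) i) (x i)
          = Complex.exp (Complex.I * (((k - k0) i : ℤ) : ℂ) * ((x i : ℝ) : ℂ)) := by
        intro i
        rw [hG]
        simp only
        rw [Set.indicator_of_mem (hxI i)]
      rw [Finset.prod_congr rfl fun i _ => hGx i]
      congr 1
      rw [ER, ← Complex.exp_sum]
      congr 1
      rw [Finset.mul_sum]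
      exact Finset.sum_congr rfl fun i _ => by ring
    · rw [hF]
      simp only
      rw [Set.indicator_of_notMem hx]
      have : ∃ i, x i ∉ Set.Ioc (0:ℝ) (2*π) := by
        by_contra hcon
        push_neg at hcon
        exact hx (by rw [hBox, Set.mem_univ_pi]; exact hcon)
      obtain ⟨i, hi⟩ := this
      rw [Finset.prod_eq_zero (Finset.mem_univ i)]
      · ring
      · rw [hG]
        simp only
        rw [Set.indicator_of_notMem hi]
  have hint : ∀ k, ∫ x : Fin d → ℝ, F k x
      = b k * (if k = k0 then (((2*π:ℝ)):ℂ)^d else 0) := by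
    intro k
    rw [hFfac k]
    rw [MeasureTheory.integral_const_mul]
    congr 1
    rw [MeasureTheory.integral_fintype_prod_volume_eq_prod (ι := Fin d) (fun i => G ((k - k0) i))]
    have h1 : ∀ i, ∫ t : ℝ, G ((k - k0) i) t
        = if (k - k0) i = 0 then (((2*π:ℝ)):ℂ) else 0 := by
      intro i
      rw [hG]
      simp only
      rw [MeasureTheory.integral_indicator measurableSet_Ioc]
      exact int1d _
    rw [Finset.prod_congr rfl fun i _ => h1 i]
    by_cases hk : k = k0
    · subst hk
      simp
    · obtain ⟨i, hi⟩ := Function.ne_iff.mp hk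
      rw [Finset.prod_eq_zero (Finset.mem_univ i)]
      · simp [hk]
      · exact if_neg (by simp only [Pi.sub_apply, sub_eq_zero]; exact hi)
  have hfinal : b k0 * (((2*π:ℝ)):ℂ)^d = 0 := by
    have h2 : ∑' k, ∫ x : Fin d → ℝ, F k x = b k0 * (((2*π:ℝ)):ℂ)^d := by
      rw [tsum_congr hint]
      rw [tsum_eq_single k0 (fun k hk => by simp [hk])]
      simp
    rw [← h2, ← hswap]
    exact hlhs
  have hne : (((2*π:ℝ)):ℂ)^d ≠ 0 := by
    apply pow_ne_zero
    rw [Complex.ofReal_ne_zero]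
    positivity
  exact (mul_eq_zero.mp hfinal).resolve_right hne


lemma norm_ch (k : Fin d → ℤ) (y : Fin d → ℝ) : ‖ch k y‖ = 1 := by
  exact abs_ch k y

lemma mulVecT_injective (hM : M.det ≠ 0) :
    Function.Injective (fun z : Fin d → ℤ => M.transpose.mulVec z) := by
  intro z z' hzz
  simp only at hzz
  have h1 : (fun j => ((M.transpose.mulVec z) j : ℝ))
      = (fun j => ((M.transpose.mulVec z') j : ℝ)) := by rw [hzz]
  rw [cast_mulVec, cast_mulVec, Matrix.transpose_map] at h1
  have h2 := congrArg (fun v => ((M.map (Int.cast : ℤ → ℝ)).transpose)⁻¹.mulVec v) h1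
  simp only [mulVecT_inv_cancel hM] at h2
  funext j
  exact_mod_cast congrFun h2 j

lemma ch_genSet_invariant {y : Fin d → ℝ} (hy : y ∈ pattern d M) (h : Fin d → ℤ)
    (z : Fin d → ℤ) : ch (h + M.transpose.mulVec z) y = ch h y := by
  rw [ch_add, ch_transpose_mulVec hy, mul_one]

end TLI

open TLI in
/-- for `f ∈ A(𝕋^d)` with Fourier coefficients `c`, the translates
`{f(· − 2πy) : y ∈ P(M)}` are linearly independent if and only if
`Σ_{z ∈ ℤ^d} |c_{h+Mᵀz}(f)|² > 0` for every `h ∈ G(Mᵀ)`. -/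
theorem translates_linearIndependent_iff (d : ℕ) (M : Matrix (Fin d) (Fin d) ℤ)
    (hM : M.det ≠ 0) (c : (Fin d → ℤ) → ℂ) (hc : Summable c) (f : (Fin d → ℝ) → ℂ)
    (hf : ∀ x : Fin d → ℝ,
      f x = ∑' k : Fin d → ℤ, c k * Complex.exp (Complex.I * ∑ i, (k i : ℂ) * (x i : ℂ))) :
    LinearIndependent ℂ
        (fun y : pattern d M => fun x : Fin d → ℝ =>
          f fun i => x i - 2 * π * (y : Fin d → ℝ) i) ↔
      ∀ h ∈ genSet d M,
        0 < ∑' z : Fin d → ℤ, ‖c (h + M.transpose.mulVec z)‖ ^ 2 := by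
  classical
  haveI : Fintype (pattern d M) := (pattern_finite hM).fintype
  have hcn : Summable fun k => ‖c k‖ := summable_norm_iff.mpr hc
  -- summability of the squares
  have hCbd : ∀ k, ‖c k‖ ≤ ∑' k', ‖c k'‖ :=
    fun k => Summable.le_tsum hcn k fun j _ => norm_nonneg _
  have hsq : Summable fun k => ‖c k‖ ^ 2 := by
    apply Summable.of_nonneg_of_le (fun k => by positivity)
      (fun k => ?_) (hcn.mul_left (∑' k', ‖c k'‖))
    rw [sq]
    exact mul_le_mul_of_nonneg_right (hCbd k) (norm_nonneg _)
  have hsub : ∀ h : Fin d → ℤ,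
      Summable fun z : Fin d → ℤ => ‖c (h + M.transpose.mulVec z)‖ ^ 2 := by
    intro h
    have hinj : Function.Injective (fun z : Fin d → ℤ => h + M.transpose.mulVec z) := by
      intro z z' hzz
      simp only [add_right_inj] at hzz
      exact mulVecT_injective hM hzz
    exact hsq.comp_injective hinj
  -- expansion of translates
  have hexp : ∀ (y : Fin d → ℝ) (x : Fin d → ℝ),
      f (fun i => x i - 2 * π * y i) = ∑' k, c k * ch k y * ER k x := by
    intro y x
    rw [hf]
    refine tsum_congr fun k => ?_
    rw [show Complex.exp (Complex.I * ∑ i, (k i : ℂ) * (((x i - 2 * π * y i : ℝ)) : ℂ))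
        = ER k (fun i => x i - 2 * π * y i) from rfl, ER_translate]
    ring
  have hS : ∀ y : Fin d → ℝ, ∀ x : Fin d → ℝ,
      Summable fun k => c k * ch k y * ER k x := by
    intro y x
    apply Summable.of_norm_bounded hcn
    intro k
    rw [norm_mul, norm_mul, norm_ch, norm_ER, mul_one, mul_one]
  have hcomb : ∀ (g : pattern d M → ℂ) (x : Fin d → ℝ),
      ∑ y : pattern d M, g y * f (fun i => x i - 2 * π * (y : Fin d → ℝ) i)
        = ∑' k, (c k * ∑ y : pattern d M, g y * ch k (y : Fin d → ℝ)) * ER k x := by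
    intro g x
    have h1 : ∀ y : pattern d M, g y * f (fun i => x i - 2 * π * (y : Fin d → ℝ) i)
        = ∑' k, g y * (c k * ch k (y : Fin d → ℝ) * ER k x) := by
      intro y
      rw [hexp (y : Fin d → ℝ) x, ← tsum_mul_left]
    rw [Finset.sum_congr rfl fun y _ => h1 y]
    rw [← Summable.tsum_finsetSum fun (y : pattern d M) _ => (hS (y : Fin d → ℝ) x).mul_left (g y)]
    refine tsum_congr fun k => ?_
    rw [Finset.mul_sum, Finset.sum_mul]
    exact Finset.sum_congr rfl fun y _ => by ring
  constructor
  · -- independent → positivity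
    intro hLI h hG
    by_contra hnot
    push_neg at hnot
    have htz : ∑' z : Fin d → ℤ, ‖c (h + M.transpose.mulVec z)‖ ^ 2 = 0 :=
      le_antisymm hnot (tsum_nonneg fun z => by positivity)
    have hvanish : ∀ z : Fin d → ℤ, c (h + M.transpose.mulVec z) = 0 := by
      intro z
      have h1 : ‖c (h + M.transpose.mulVec z)‖ ^ 2 ≤ 0 := by
        rw [← htz]
        exact Summable.le_tsum (hsub h) z fun j _ => by positivity
      have h2 : ‖c (h + M.transpose.mulVec z)‖ ^ 2 = 0 :=
        le_antisymm h1 (by positivity)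
      have h3 : ‖c (h + M.transpose.mulVec z)‖ = 0 := by
        nlinarith [norm_nonneg (c (h + M.transpose.mulVec z))]
      exact norm_eq_zero.mp h3
    set g : pattern d M → ℂ := fun y => (ch h (y : Fin d → ℝ))⁻¹ with hg
    have hzero : ∑ y : pattern d M, g y •
        (fun x : Fin d → ℝ => f fun i => x i - 2 * π * (y : Fin d → ℝ) i) = 0 := by
      funext x
      rw [Finset.sum_apply]
      simp only [Pi.smul_apply, smul_eq_mul, Pi.zero_apply]
      rw [hcomb g x]
      have hterm : ∀ k : Fin d → ℤ,
          (c k * ∑ y : pattern d M, g y * ch k (y : Fin d → ℝ)) * ER k x = 0 := by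
        intro k
        by_cases hkk : ∃ z : Fin d → ℤ, k - h = M.transpose.mulVec z
        · obtain ⟨z, hz⟩ := hkk
          have hkh : k = h + M.transpose.mulVec z := by rw [← hz]; ring
          rw [hkh, hvanish z, zero_mul, zero_mul]
        · have hterm2 : ∀ y : pattern d M, g y * ch k (y : Fin d → ℝ)
              = ch (k - h) (y : Fin d → ℝ) := by
            intro y
            rw [hg]
            simp only
            have he : ch k (y : Fin d → ℝ)
                = ch (k - h) (y : Fin d → ℝ) * ch h (y : Fin d → ℝ) := by
              rw [← ch_add]
              congr 1
              ring
            rw [he, mul_comm (ch (k - h) (y : Fin d → ℝ)) (ch h (y : Fin d → ℝ)),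
              ← mul_assoc, inv_mul_cancel₀ (ch_ne_zero h (y : Fin d → ℝ)), one_mul]
          have hsum0 : ∑ y : pattern d M, g y * ch k (y : Fin d → ℝ) = 0 := by
            rw [Finset.sum_congr rfl fun y _ => hterm2 y]
            exact sum_ch_eq_zero hM hkk
          rw [hsum0, mul_zero, zero_mul]
      rw [tsum_congr hterm, tsum_zero]
    have hgz := Fintype.linearIndependent_iff.mp hLI g hzero ⟨0, zero_mem_pattern⟩
    exact inv_ne_zero (ch_ne_zero h (0 : Fin d → ℝ)) (by simpa [hg] using hgz)
  · -- positivity → independent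
    intro hpos
    rw [Fintype.linearIndependent_iff]
    intro g hg
    have hx : ∀ x : Fin d → ℝ,
        ∑' k, (c k * ∑ y : pattern d M, g y * ch k (y : Fin d → ℝ)) * ER k x = 0 := by
      intro x
      rw [← hcomb g x]
      have := congrFun hg x
      rw [Finset.sum_apply] at this
      simpa only [Pi.smul_apply, smul_eq_mul, Pi.zero_apply] using this
    have hbsum : Summable fun k =>
        ‖c k * ∑ y : pattern d M, g y * ch k (y : Fin d → ℝ)‖ := by
      apply Summable.of_nonneg_of_le (fun k => norm_nonneg _) (fun k => ?_)
        ((hcn.mul_left (∑ y : pattern d M, ‖g y‖)))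
      rw [norm_mul, mul_comm]
      apply mul_le_mul_of_nonneg_right _ (norm_nonneg _)
      calc ‖∑ y : pattern d M, g y * ch k (y : Fin d → ℝ)‖
          ≤ ∑ y : pattern d M, ‖g y * ch k (y : Fin d → ℝ)‖ := norm_sum_le _ _
        _ = ∑ y : pattern d M, ‖g y‖ := by
            refine Finset.sum_congr rfl fun y _ => ?_
            rw [norm_mul, norm_ch, mul_one]
    have hck : ∀ k, c k * ∑ y : pattern d M, g y * ch k (y : Fin d → ℝ) = 0 :=
      fourier_unique hbsum hx
    have hSzero : ∀ k : Fin d → ℤ, ∑ y : pattern d M, g y * ch k (y : Fin d → ℝ) = 0 := by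
      intro k
      obtain ⟨h, hh, z, hk⟩ := exists_genSet_rep hM k
      have hz0 : ∃ z0 : Fin d → ℤ, c (h + M.transpose.mulVec z0) ≠ 0 := by
        by_contra hcon
        push_neg at hcon
        have hzz : ∀ z : Fin d → ℤ, ‖c (h + M.transpose.mulVec z)‖ ^ 2 = 0 :=
          fun z => by rw [hcon z]; simp
        have : ∑' z : Fin d → ℤ, ‖c (h + M.transpose.mulVec z)‖ ^ 2 = 0 := by
          rw [tsum_congr hzz]
          exact tsum_zero
        have hp := hpos h hh
        rw [this] at hp
        exact lt_irrefl 0 hp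
      obtain ⟨z0, hz0⟩ := hz0
      have hS1 : ∑ y : pattern d M, g y * ch (h + M.transpose.mulVec z0) (y : Fin d → ℝ) = 0 := by
        rcases mul_eq_zero.mp (hck (h + M.transpose.mulVec z0)) with h' | h'
        · exact absurd h' hz0
        · exact h'
      have hinv : ∀ z' : Fin d → ℤ,
          ∑ y : pattern d M, g y * ch (h + M.transpose.mulVec z') (y : Fin d → ℝ)
            = ∑ y : pattern d M, g y * ch h (y : Fin d → ℝ) :=
        fun z' => Finset.sum_congr rfl fun y _ => by rw [ch_genSet_invariant y.2 h z']
      rw [hk, hinv z, ← hinv z0]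
      exact hS1
    exact eq_zero_of_forall_sum_ch g hSzero
end

section
/- Let M ∈ ℤ^{d×d} be regular, f ∈ A(𝕋^d) such that [c(f)]_h^M ≠ 0 for all h ∈ G(Mᵀ), and let g̃ ∈ A(𝕋^d). Then the function g ∈ V_M^f defined through coefficients â_h = [c(g̃)]_h^M / [c(f)]_h^M (i.e. c_{h+Mᵀz}(g) = â_h c_{h+Mᵀz}(f)) interpolates g̃ on the pattern: g(2πy) = g̃(2πy) for all y ∈ P(M). -/
open scoped Real

lemma mulVec_int_injective {d : ℕ} (M : Matrix (Fin d) (Fin d) ℤ) (hM : M.det ≠ 0) :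
    Function.Injective M.mulVec := by
  have hQ : Function.Injective (M.map (Int.cast : ℤ → ℚ)).mulVec := by
    apply Matrix.mulVec_injective_iff_isUnit.mpr
    rw [Matrix.isUnit_iff_isUnit_det]
    have : (M.map (Int.cast : ℤ → ℚ)).det = (M.det : ℚ) := by
      simpa using (RingHom.map_det (Int.castRingHom ℚ) M).symm
    rw [this]
    exact isUnit_iff_ne_zero.mpr (by exact_mod_cast hM)
  intro a b hab
  have h2 : (M.map (Int.cast : ℤ → ℚ)).mulVec (fun i => (a i : ℚ)) =
      (M.map (Int.cast : ℤ → ℚ)).mulVec (fun i => (b i : ℚ)) := by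
    funext j
    have := congr_fun hab j
    simp only [Matrix.mulVec, dotProduct, Matrix.map_apply]
    exact_mod_cast this
  have := hQ h2
  funext i
  have := congr_fun this i
  exact_mod_cast this

set_option maxHeartbeats 1000000

/-- let `f ∈ A(𝕋^d)` have nonvanishing bracket sums
`[c(f)]_h^M ≠ 0`, `h ∈ G(Mᵀ)`, and let `g̃ ∈ A(𝕋^d)`.  The function `g ∈ V_M^f`
whose Fourier coefficients are `c_{h+Mᵀz}(g) = â_h c_{h+Mᵀz}(f)` with
`â_h = [c(g̃)]_h^M / [c(f)]_h^M` interpolates `g̃` on the pattern: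
`g(2πy) = g̃(2πy)` for all `y ∈ P(M)`. -/
theorem interpolation_in_translates (d : ℕ) (M : Matrix (Fin d) (Fin d) ℤ)
    (hM : M.det ≠ 0)
    (cf cg' cg : (Fin d → ℤ) → ℂ)
    (hcf : Summable cf) (hcg' : Summable cg') (hcg : Summable cg)
    (f g' g : (Fin d → ℝ) → ℂ)
    (hf : ∀ x : Fin d → ℝ,
      f x = ∑' k : Fin d → ℤ, cf k * Complex.exp (Complex.I * ∑ i, (k i : ℂ) * (x i : ℂ)))
    (hg' : ∀ x : Fin d → ℝ,
      g' x = ∑' k : Fin d → ℤ, cg' k * Complex.exp (Complex.I * ∑ i, (k i : ℂ) * (x i : ℂ)))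
    (hg : ∀ x : Fin d → ℝ,
      g x = ∑' k : Fin d → ℤ, cg k * Complex.exp (Complex.I * ∑ i, (k i : ℂ) * (x i : ℂ)))
    -- `G(Mᵀ)` is a complete set of representatives of `ℤ^d` modulo `Mᵀℤ^d`:
    (hrep : ∀ k : Fin d → ℤ, ∃! h, h ∈ genSet d M ∧ ∃ z : Fin d → ℤ,
      k = h + M.transpose.mulVec z)
    -- nonvanishing bracket sums of `f`:
    (hbr : ∀ h ∈ genSet d M, ∑' z : Fin d → ℤ, cf (h + M.transpose.mulVec z) ≠ 0)
    -- the coefficients of `g` are `â_h c_{h+Mᵀz}(f)` with `â_h = [c(g̃)]_h^M/[c(f)]_h^M`: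
    (hcoeff : ∀ h ∈ genSet d M, ∀ z : Fin d → ℤ,
      cg (h + M.transpose.mulVec z) =
        ((∑' w : Fin d → ℤ, cg' (h + M.transpose.mulVec w)) /
            (∑' w : Fin d → ℤ, cf (h + M.transpose.mulVec w))) *
          cf (h + M.transpose.mulVec z)) :
    ∀ y ∈ pattern d M, g (fun i => 2 * π * y i) = g' (fun i => 2 * π * y i) := by
  intro y hy
  obtain ⟨hint, -⟩ := hy
  choose n hn using hint
  set x : Fin d → ℝ := fun i => 2 * π * y i with hxdef
  set E : (Fin d → ℤ) → ℂ :=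
    fun k => Complex.exp (Complex.I * ∑ i, (k i : ℂ) * (x i : ℂ)) with hE
  -- the exponent is (a cast of) a real number
  have hreal : ∀ k : Fin d → ℤ,
      (∑ i, (k i : ℂ) * (x i : ℂ)) = ((∑ i, (k i : ℝ) * x i : ℝ) : ℂ) := by
    intro k; push_cast; ring
  have hEnorm : ∀ k, ‖E k‖ = 1 := by
    intro k
    rw [hE]
    show ‖Complex.exp (Complex.I * ∑ i, (k i : ℂ) * (x i : ℂ))‖ = 1
    rw [hreal k, mul_comm, Complex.norm_exp_ofReal_mul_I]
  -- the key periodicity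
  have hsumR : ∀ z : Fin d → ℤ,
      ∑ i, ((M.transpose.mulVec z) i : ℝ) * x i = 2 * π * ∑ j, (z j : ℝ) * (n j : ℝ) := by
    intro z
    have h1 : ∀ i, ((M.transpose.mulVec z) i : ℝ) = ∑ j, (M j i : ℝ) * (z j : ℝ) := by
      intro i
      simp only [Matrix.mulVec, dotProduct, Matrix.transpose_apply]
      push_cast; ring
    calc ∑ i, ((M.transpose.mulVec z) i : ℝ) * x i
        = ∑ i, ∑ j, (z j : ℝ) * ((M j i : ℝ) * (2 * π * y i)) := by
          refine Finset.sum_congr rfl fun i _ => ?_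
          rw [h1 i, Finset.sum_mul]
          exact Finset.sum_congr rfl fun j _ => by rw [hxdef]; ring
      _ = ∑ j, (z j : ℝ) * (2 * π * ∑ i, (M j i : ℝ) * y i) := by
          rw [Finset.sum_comm]
          refine Finset.sum_congr rfl fun j _ => ?_
          rw [Finset.mul_sum, Finset.mul_sum]
          exact Finset.sum_congr rfl fun i _ => by ring
      _ = ∑ j, (z j : ℝ) * (2 * π * (n j : ℝ)) := by
          refine Finset.sum_congr rfl fun j _ => ?_
          have := hn j
          simp only [Matrix.mulVec, dotProduct, Matrix.map_apply] at this
          rw [this]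
      _ = 2 * π * ∑ j, (z j : ℝ) * (n j : ℝ) := by
          rw [Finset.mul_sum]
          exact Finset.sum_congr rfl fun j _ => by ring
  have key : ∀ (h z : Fin d → ℤ), E (h + M.transpose.mulVec z) = E h := by
    intro h z
    rw [hE]
    simp only
    have hsplit : (∑ i, (((h + M.transpose.mulVec z) i : ℤ) : ℂ) * (x i : ℂ))
        = (∑ i, (h i : ℂ) * (x i : ℂ)) + (∑ i, ((M.transpose.mulVec z) i : ℂ) * (x i : ℂ)) := by
      rw [← Finset.sum_add_distrib]
      refine Finset.sum_congr rfl fun i _ => ?_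
      simp only [Pi.add_apply, Int.cast_add]
      ring
    have h2 : (∑ i, ((M.transpose.mulVec z) i : ℂ) * (x i : ℂ))
        = ((∑ j, z j * n j : ℤ) : ℂ) * (2 * π) := by
      rw [hreal (M.transpose.mulVec z), hsumR z]
      push_cast; ring
    rw [hsplit, h2, mul_add, Complex.exp_add]
    have h3 : Complex.I * (((∑ j, z j * n j : ℤ) : ℂ) * (2 * π))
        = ((∑ j, z j * n j : ℤ) : ℂ) * (2 * π * Complex.I) := by ring
    rw [h3, Complex.exp_int_mul_two_pi_mul_I, mul_one]
  -- the equivalence between (genSet × ℤ^d) and ℤ^d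
  set φ : {h : Fin d → ℤ // h ∈ genSet d M} × (Fin d → ℤ) → (Fin d → ℤ) :=
    fun p => p.1.1 + M.transpose.mulVec p.2 with hφ
  have hMTinj : Function.Injective (M.transpose.mulVec (α := ℤ)) :=
    mulVec_int_injective M.transpose (by rwa [Matrix.det_transpose])
  have hinj : Function.Injective φ := by
    rintro ⟨⟨h1, hh1⟩, z1⟩ ⟨⟨h2, hh2⟩, z2⟩ hpq
    simp only [hφ] at hpq
    obtain ⟨h0, -, huniq⟩ := hrep (h1 + M.transpose.mulVec z1)
    have e1 : h1 = h0 := huniq h1 ⟨hh1, z1, rfl⟩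
    have e2 : h2 = h0 := huniq h2 ⟨hh2, z2, hpq⟩
    have hh : h1 = h2 := e1.trans e2.symm
    subst hh
    have hz : M.transpose.mulVec z1 = M.transpose.mulVec z2 := by
      exact add_left_cancel hpq
    have : z1 = z2 := hMTinj hz
    simp [this]
  have hsurj : Function.Surjective φ := by
    intro k
    obtain ⟨h, ⟨hh, z, hk⟩, -⟩ := hrep k
    exact ⟨⟨⟨h, hh⟩, z⟩, hk.symm⟩
  set e : {h : Fin d → ℤ // h ∈ genSet d M} × (Fin d → ℤ) ≃ (Fin d → ℤ) :=
    Equiv.ofBijective φ ⟨hinj, hsurj⟩ with he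
  -- summability facts
  have hsumF : ∀ (c : (Fin d → ℤ) → ℂ), Summable c → Summable (fun k => c k * E k) := by
    intro c hc
    apply Summable.of_norm
    have : (fun k => ‖c k * E k‖) = fun k => ‖c k‖ := by
      funext k; rw [norm_mul, hEnorm k, mul_one]
    rw [this]
    exact hc.norm
  have hmain : ∀ (c : (Fin d → ℤ) → ℂ), Summable c →
      ∑' k, c k * E k = ∑' h : {h : Fin d → ℤ // h ∈ genSet d M},
        (∑' z : Fin d → ℤ, c (h.1 + M.transpose.mulVec z)) * E h.1 := by
    intro c hc
    have hF := hsumF c hc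
    have hP : Summable (fun p => c (φ p) * E (φ p)) := by
      have := e.summable_iff.mpr hF
      exact this
    rw [← e.tsum_eq fun k => c k * E k]
    simp only [he, Equiv.ofBijective_apply]
    erw [Summable.tsum_prod hP]
    refine tsum_congr fun h => ?_
    simp only [hφ]
    calc ∑' z, c (h.1 + M.transpose.mulVec z) * E (h.1 + M.transpose.mulVec z)
        = ∑' z, c (h.1 + M.transpose.mulVec z) * E h.1 :=
          tsum_congr fun z => by rw [key h.1 z]
      _ = (∑' z, c (h.1 + M.transpose.mulVec z)) * E h.1 := tsum_mul_right
  rw [hg x, hg' x, hmain cg hcg, hmain cg' hcg']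
  refine tsum_congr fun h => ?_
  congr 1
  have : ∑' z, cg (h.1 + M.transpose.mulVec z)
      = ∑' z, ((∑' w, cg' (h.1 + M.transpose.mulVec w)) /
          (∑' w, cf (h.1 + M.transpose.mulVec w))) * cf (h.1 + M.transpose.mulVec z) :=
    tsum_congr fun z => hcoeff h.1 h.2 z
  rw [this, tsum_mul_left, div_mul_cancel₀ _ (hbr h.1 h.2)]
end
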